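/- arXiv:1711.06063 — 5 statements merged into one kernel-verified Lean document; each statement's English description precedes it below -/
import Mathlib

section
/- Let p be an odd prime, f even with f ∣ p−1, and suppose 2^{p−1} ≢ 1 (mod p²). Let λ be the multiplicative order of 2 modulo p. Then for every integer k with 0 ≤ k < (p²−p)/2, the k-error linear complexity over F₂ of the sequence (s_n) satisfies LC_k ≥ λ·p. -/
/-!
Suppose `t` differs from `s` in fewer than `(p² - p)/2` places of a period and
`LC(t) < λp`, i.e. `G = gcd(X^{p²} - 1, S_t)` has degree `> p² - λp`. Over `𝔽₂` every
irreducible factor of the cyclotomic polynomial `Φ_{p²} = ∑_{i<p} X^{ip}` has degree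
`ord_{p²}(2)`, which is `λp` because `2^{p-1} ≢ 1 (mod p²)`. As `Φ_{p²}` is squarefree and
divides `X^{p²} - 1`, an irreducible factor of `Φ_{p²}` missing from `G` would leave no room for
the degree of `G`; hence `Φ_{p²} ∣ S_t`, which means that `t_n` only depends on `n mod p`.
On the other hand, writing units modulo `p²` as powers of `g`, each residue class modulo `p`
meets `C₁` in `(p - 1)/2` or `(p + 1)/2` of its `p` elements. So `t` differs from `s` in at
least `(p - 1)/2` places of every class, `(p² - p)/2` places in all.
-/

open Polynomial Finset

/-- The Fermat quotient `q_p(u) ∈ {0,…,p-1}`, with `q_p(u) ≡ (u^(p-1)-1)/p (mod p)`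
for `gcd(u,p)=1`, and `q_p(u)=0` if `p ∣ u`. -/
def qp (p u : ℕ) : ℕ := if u % p = 0 then 0 else (u ^ (p - 1) - 1) / p % p

/-- The generalized cyclotomic class `D_l^{(p^j, f)} = {g^(l + k·f·p^(j-1)) mod p^j : 0 ≤ k < e}`
where `e = (p-1)/f`. -/
def Dcl (p f g j l : ℕ) : Finset ℕ :=
  (Finset.range ((p - 1) / f)).image (fun k => g ^ (l + k * f * p ^ (j - 1)) % p ^ j)

/-- The class `D_l = {u : 0 ≤ u < p², gcd(u,p)=1, q_p(u)=l}` defined via Fermat quotients. -/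
def Dq (p l : ℕ) : Finset ℕ :=
  (Finset.range (p ^ 2)).filter (fun u => u % p ≠ 0 ∧ qp p u = l)

/-- `C_0 = ⋃_{i=f/2}^{f-1} p·D_{(i+b mod f)}^{(p,f)} ∪ ⋃_{i=pf/2}^{pf-1} D_{(i+b mod pf)}^{(p²,f)}`. -/
def C0 (p f g b : ℕ) : Finset ℕ :=
  ((Finset.Ico (f / 2) f).biUnion
      (fun i => (Dcl p f g 1 ((i + b) % f)).image (fun v => p * v))) ∪
  ((Finset.Ico (p * f / 2) (p * f)).biUnion (fun i => Dcl p f g 2 ((i + b) % (p * f))))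

/-- `C_1 = ⋃_{i=0}^{f/2-1} p·D_{(i+b mod f)}^{(p,f)} ∪ ⋃_{i=0}^{pf/2-1} D_{(i+b mod pf)}^{(p²,f)} ∪ {0}`. -/
def C1 (p f g b : ℕ) : Finset ℕ :=
  ((Finset.range (f / 2)).biUnion
      (fun i => (Dcl p f g 1 ((i + b) % f)).image (fun v => p * v))) ∪
  ((Finset.range (p * f / 2)).biUnion (fun i => Dcl p f g 2 ((i + b) % (p * f)))) ∪ {0}

/-- The binary sequence `(s_n)` of period `p²`: `s_n = 1` iff `n mod p² ∈ C_1`. -/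
def seqS (p f g b : ℕ) (n : ℕ) : ZMod 2 :=
  if n % p ^ 2 ∈ C1 p f g b then 1 else 0

/-- Generating polynomial `S(X) = Σ_{n<T} s_n X^n ∈ F₂[X]`. -/
noncomputable def genPoly (T : ℕ) (s : ℕ → ZMod 2) : Polynomial (ZMod 2) :=
  ∑ n ∈ Finset.range T, Polynomial.C (s n) * Polynomial.X ^ n

/-- Linear complexity over `F₂` of a `T`-periodic sequence:
`LC = T - deg gcd(X^T - 1, S(X))`. -/
noncomputable def LC (T : ℕ) (s : ℕ → ZMod 2) : ℕ :=
  T - (EuclideanDomain.gcd (Polynomial.X ^ T - 1) (genPoly T s)).natDegree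

/-- The `k`-error linear complexity over `F₂`: the minimum linear complexity obtainable
by changing at most `k` terms of the sequence per period. -/
noncomputable def errLC (T k : ℕ) (s : ℕ → ZMod 2) : ℕ :=
  sInf { L | ∃ t : ℕ → ZMod 2,
    ((Finset.range T).filter (fun n => t n ≠ s n)).card ≤ k ∧ L = LC T t }

/-- `g` is a primitive root modulo `m`: its multiplicative order in `ZMod m` is `φ(m)`. -/
def isPrimRoot (g m : ℕ) : Prop := orderOf (g : ZMod m) = Nat.totient m

/-- `Q_b = ⋃_{i=0}^{f/2-1} D_{(i+b mod f)}^{(p,f)} ⊆ {1,…,p-1}`. -/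
def Qb (p f g b : ℕ) : Finset ℕ :=
  (Finset.range (f / 2)).biUnion (fun i => Dcl p f g 1 ((i + b) % f))

/-- `N_b = {1,…,p-1} \ Q_b`. -/
def Nb (p f g b : ℕ) : Finset ℕ := (Finset.Ico 1 p) \ Qb p f g b

/-- `V_v = {v, v+p, v+2p, …, v+(p-1)p}`. -/
def Vset (p v : ℕ) : Finset ℕ := (Finset.range p).image (fun i => v + i * p)

namespace Finset

variable {α β : Type*} [DecidableEq β] {s : Finset α} {t : Finset β} {φ : α → β}

theorem image_eq_of_injOn_of_card_le (hφ : ∀ a ∈ s, φ a ∈ t) (hinj : Set.InjOn φ s)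
    (hcard : #t ≤ #s) : s.image φ = t :=
  eq_of_subset_of_card_le (image_subset_iff.2 hφ) (by rwa [card_image_of_injOn hinj])

theorem card_filter_comp_of_injOn (hφ : ∀ a ∈ s, φ a ∈ t) (hinj : Set.InjOn φ s)
    (hcard : #t ≤ #s) (P : β → Prop) [DecidablePred P] :
    #{a ∈ s | P (φ a)} = #{b ∈ t | P b} := by
  rw [← image_eq_of_injOn_of_card_le hφ hinj hcard, filter_image,
    card_image_of_injOn (hinj.mono (coe_subset.2 (filter_subset _ _)))]

end Finset

namespace Nat

theorem exists_lt_add_mul_modEq_iff {a m N e : ℕ} (he : 0 < e) :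
    (∃ k < e, a + k * N ≡ m [MOD N * e]) ↔ a ≡ m [MOD N] := by
  constructor
  · rintro ⟨k, -, hk⟩
    exact (Nat.add_mul_mod_self_right a k N).symm.trans (hk.of_mul_right e)
  · intro h
    obtain ⟨t, ht⟩ := (Nat.modEq_iff_dvd.mp h)
    have h0 := Int.emod_nonneg t (by omega : (e : ℤ) ≠ 0)
    have h1 := Int.emod_lt_of_pos t (by omega : (0 : ℤ) < e)
    refine ⟨(t % e).toNat, by omega, Nat.modEq_iff_dvd.mpr ⟨t / e, ?_⟩⟩
    push_cast [Int.toNat_of_nonneg h0]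
    linear_combination ht - N * Int.emod_def t e

theorem filter_exists_add_modEq_eq_image {K N : ℕ} (b : ℕ) (hKN : K ≤ N) :
    {x ∈ range N | ∃ i < K, i + b ≡ x [MOD N]} = (range K).image (fun i => (i + b) % N) := by
  ext x
  simp only [mem_filter, mem_range, mem_image]
  constructor
  · rintro ⟨hx, i, hi, hix⟩
    exact ⟨i, hi, Eq.trans hix (Nat.mod_eq_of_lt hx)⟩
  · rintro ⟨i, hi, rfl⟩
    exact ⟨Nat.mod_lt _ (by omega), i, hi, (Nat.mod_modEq _ _).symm⟩

theorem injOn_add_mod {K N : ℕ} (b : ℕ) (hKN : K ≤ N) :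
    Set.InjOn (fun i => (i + b) % N) (range K) := by
  intro i hi i' hi' h
  simp only [coe_range, Set.mem_Iio] at hi hi'
  exact (Nat.ModEq.add_right_cancel' b h).eq_of_lt_of_lt (by omega) (by omega)

theorem card_filter_exists_add_modEq {K N : ℕ} (b : ℕ) (hKN : K ≤ N) :
    #{x ∈ range N | ∃ i < K, i + b ≡ x [MOD N]} = K := by
  rw [filter_exists_add_modEq_eq_image b hKN, Finset.card_image_of_injOn (injOn_add_mod b hKN),
    card_range]

theorem count_mul_of_periodic {P : ℕ → Prop} [DecidablePred P] {N : ℕ}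
    (hP : Function.Periodic P N) (e : ℕ) : count P (N * e) = e * count P N := by
  induction e with
  | zero => simp
  | succ e ih =>
    have hshift : (fun k => P (N * e + k)) = P :=
      funext fun k => by simpa [add_comm, mul_comm] using hP.nat_mul e k
    rw [Nat.mul_succ, count_add, ih]
    simp only [hshift]
    ring

theorem card_filter_add_modEq_mem_Icc {f : ℕ} (hf : 0 < f) (K b c : ℕ) :
    #{i ∈ range K | i + b ≡ c [MOD f]} ∈ Icc (K / f) (K / f + 1) := by
  have : NeZero f := ⟨hf.ne'⟩
  have hshift : {i ∈ range K | i + b ≡ c [MOD f]} =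
      {i ∈ range K | i ≡ ((c : ZMod f) - b).val [MOD f]} := by
    refine filter_congr fun i _ => ?_
    rw [← ZMod.natCast_eq_natCast_iff, ← ZMod.natCast_eq_natCast_iff, ZMod.natCast_zmod_val,
      Nat.cast_add, eq_sub_iff_add_eq]
  rw [hshift, ← count_eq_card_filter_range, count_modEq_card K hf, mem_Icc]
  split_ifs <;> omega

theorem card_filter_modEq_exists_add_modEq {N f K : ℕ} (hfN : f ∣ N) (hKN : K ≤ N)
    (b c : ℕ) :
    #{x ∈ {x ∈ range N | x ≡ c [MOD f]} | ∃ i < K, i + b ≡ x [MOD N]} =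
      #{i ∈ range K | i + b ≡ c [MOD f]} := by
  rw [filter_comm, filter_exists_add_modEq_eq_image b hKN, filter_image,
    Finset.card_image_of_injOn ((injOn_add_mod b hKN).mono (coe_subset.2 (filter_subset _ _)))]
  congr 1
  exact filter_congr fun i _ => by simp only [Nat.ModEq, Nat.mod_mod_of_dvd _ hfN]

theorem card_filter_add_mul_mul_eq {p f e : ℕ} (hcop : p.Coprime e) (hf : 0 < f) (c : ℕ)
    (P : ℕ → Prop) [DecidablePred P] (hP : ∀ y, P (y % (p * f)) ↔ P y) :
    #{r ∈ range p | P (c + r * (f * e))} =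
      #{x ∈ {x ∈ range (p * f) | x ≡ c [MOD f]} | P x} := by
  have hreorder : ∀ r, c + r * (f * e) = c + r * e * f := fun r => by ring
  have hmaps : ∀ r ∈ range p,
      (c + r * (f * e)) % (p * f) ∈ {x ∈ range (p * f) | x ≡ c [MOD f]} := by
    intro r hr
    have := mem_range.1 hr
    rw [mem_filter, mem_range, Nat.ModEq, Nat.mod_mod_of_dvd _ (dvd_mul_left f p), hreorder,
      Nat.add_mul_mod_self_right]
    exact ⟨Nat.mod_lt _ (Nat.mul_pos (by omega) hf), rfl⟩
  have hinj : Set.InjOn (fun r => (c + r * (f * e)) % (p * f)) (range p) := by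
    intro r hr r' hr' h
    simp only [coe_range, Set.mem_Iio] at hr hr'
    have h' : r * e * f ≡ r' * e * f [MOD p * f] :=
      Nat.ModEq.add_left_cancel' c (by simpa only [hreorder, Nat.ModEq] using h)
    exact (Nat.ModEq.cancel_right_of_coprime hcop (h'.mul_right_cancel' hf.ne')).eq_of_lt_of_lt
      hr hr'
  have hcard : #{x ∈ range (p * f) | x ≡ c [MOD f]} ≤ #(range p) := by
    rw [← count_eq_card_filter_range, count_modEq_card _ hf, Nat.mul_mod_left,
      Nat.mul_div_cancel _ hf, card_range]
    simp
  rw [← card_filter_comp_of_injOn hmaps hinj hcard]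
  simp only [hP]

end Nat

theorem pow_mod_eq_pow_mod_iff {g n a c : ℕ} (hg : IsOfFinOrder (g : ZMod n)) :
    g ^ a % n = g ^ c % n ↔ a ≡ c [MOD orderOf (g : ZMod n)] := by
  rw [← ZMod.natCast_eq_natCast_iff', Nat.cast_pow, Nat.cast_pow, hg.pow_eq_pow_iff_modEq]

section OrderModPrimeSq

variable {p : ℕ} [hp : Fact p.Prime]

theorem orderOf_natCast_dvd_orderOf_sq (a : ℕ) :
    orderOf (a : ZMod p) ∣ orderOf (a : ZMod (p ^ 2)) := by
  simpa using orderOf_map_dvd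
    (ZMod.castHom (dvd_pow_self p two_ne_zero) (ZMod p)).toMonoidHom (a : ZMod (p ^ 2))

theorem orderOf_natCast_sq_dvd (a : ℕ) :
    orderOf (a : ZMod (p ^ 2)) ∣ orderOf (a : ZMod p) * p := by
  set d := orderOf (a : ZMod p)
  apply orderOf_dvd_of_pow_eq_one
  have hmodp : ((1 : ℤ) : ZMod p) = ((a ^ d : ℤ) : ZMod p) := by
    push_cast; exact (pow_orderOf_eq_one _).symm
  have hmodsq := dvd_sub_pow_of_dvd_sub ((ZMod.intCast_eq_intCast_iff_dvd_sub _ _ _).1 hmodp) 1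
  rw [pow_one, one_pow] at hmodsq
  have := (ZMod.intCast_eq_intCast_iff_dvd_sub 1 ((a ^ d : ℤ) ^ p) (p ^ 2)).2
    (by exact_mod_cast hmodsq)
  push_cast at this
  rw [pow_mul, ← this]

theorem orderOf_natCast_sq_of_pow_ne_one {a : ℕ} (ha : (a : ZMod p) ≠ 0)
    (h : (a : ZMod (p ^ 2)) ^ (p - 1) ≠ 1) :
    orderOf (a : ZMod (p ^ 2)) = orderOf (a : ZMod p) * p := by
  have hdvd := ZMod.orderOf_dvd_card_sub_one ha
  have hpos : 0 < orderOf (a : ZMod p) :=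
    Nat.pos_of_dvd_of_pos hdvd (by have := hp.out.two_le; omega)
  obtain ⟨m, hm⟩ := orderOf_natCast_dvd_orderOf_sq (p := p) a
  have hmp : m ∣ p := by
    have := orderOf_natCast_sq_dvd (p := p) a
    rwa [hm, Nat.mul_dvd_mul_iff_left hpos] at this
  rcases (Nat.dvd_prime hp.out).1 hmp with rfl | rfl
  · rw [mul_one] at hm
    exact absurd (orderOf_dvd_iff_pow_eq_one.1 (hm ▸ hdvd)) h
  · exact hm

theorem orderOf_zmod_sq_of_isPrimRoot {g : ℕ} (hg : isPrimRoot g (p ^ 2)) :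
    orderOf (g : ZMod (p ^ 2)) = p * (p - 1) := by
  rw [isPrimRoot] at hg
  rw [hg, Nat.totient_prime_pow hp.out two_pos]
  norm_num

theorem natCast_ne_zero_of_isPrimRoot {g : ℕ} (hg : isPrimRoot g (p ^ 2)) :
    (g : ZMod p) ≠ 0 := by
  intro h0
  have := orderOf_natCast_dvd_orderOf_sq (p := p) g
  rw [h0, orderOf_zero, zero_dvd_iff, orderOf_zmod_sq_of_isPrimRoot hg] at this
  exact Nat.mul_ne_zero hp.out.ne_zero (by have := hp.out.two_le; omega) this

theorem orderOf_zmod_of_isPrimRoot {g : ℕ} (hg : isPrimRoot g (p ^ 2)) :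
    orderOf (g : ZMod p) = p - 1 := by
  refine Nat.dvd_antisymm (ZMod.orderOf_dvd_card_sub_one (natCast_ne_zero_of_isPrimRoot hg)) ?_
  have := orderOf_natCast_sq_dvd (p := p) g
  rw [orderOf_zmod_sq_of_isPrimRoot hg, mul_comm (orderOf _)] at this
  exact Nat.dvd_of_mul_dvd_mul_left hp.out.pos this

theorem isOfFinOrder_zmod_sq_of_isPrimRoot {g : ℕ} (hg : isPrimRoot g (p ^ 2)) :
    IsOfFinOrder (g : ZMod (p ^ 2)) := by
  refine orderOf_pos_iff.1 ?_
  rw [orderOf_zmod_sq_of_isPrimRoot hg]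
  have := hp.out.two_le
  exact Nat.mul_pos (by omega) (by omega)

theorem isOfFinOrder_zmod_of_isPrimRoot {g : ℕ} (hg : isPrimRoot g (p ^ 2)) :
    IsOfFinOrder (g : ZMod p) := by
  refine orderOf_pos_iff.1 ?_
  rw [orderOf_zmod_of_isPrimRoot hg]
  have := hp.out.two_le
  omega

theorem orderOf_two_zmod_sq (hodd : Odd p) (h2 : (2 : ZMod (p ^ 2)) ^ (p - 1) ≠ 1) :
    orderOf (2 : ZMod (p ^ 2)) = orderOf (2 : ZMod p) * p := by
  have h2p : ((2 : ℕ) : ZMod p) ≠ 0 := by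
    rw [Ne, ZMod.natCast_eq_zero_iff]
    intro h
    have := Nat.le_of_dvd two_pos h
    have := hp.out.two_le
    obtain ⟨n, rfl⟩ := hodd
    omega
  exact_mod_cast orderOf_natCast_sq_of_pow_ne_one h2p (by exact_mod_cast h2)

end OrderModPrimeSq

theorem Squarefree.dvd_of_forall_irreducible_dvd {R : Type*} [CommRing R] [IsDomain R]
    [UniqueFactorizationMonoid R] {A B : R} (hA : Squarefree A)
    (h : ∀ q : R, Irreducible q → q ∣ A → q ∣ B) : A ∣ B := by
  induction A using WfDvdMonoid.induction_on_irreducible with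
  | zero => exact absurd hA not_squarefree_zero
  | unit u hu => exact hu.dvd
  | mul a q _ hq ih =>
    have hqa : ¬ q ∣ a := fun hd => hq.not_isUnit (hA q (mul_dvd_mul_left q hd))
    exact ((hq.isRelPrime_iff_not_dvd).2 hqa).mul_dvd (h q hq (dvd_mul_right q a))
      (ih (hA.squarefree_of_dvd (dvd_mul_left a q)) fun r hr hra => h r hr (hra.mul_left q))

namespace Polynomial

variable {K : Type*} [Field K]

theorem dvd_of_natDegree_lt_add {A G Φ : K[X]} {d : ℕ} (hA : A ≠ 0) (hΦ : Squarefree Φ)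
    (hΦA : Φ ∣ A) (hGA : G ∣ A)
    (hdeg : ∀ q, Irreducible q → q ∣ Φ → d ≤ q.natDegree)
    (hlt : A.natDegree < G.natDegree + d) : Φ ∣ G := by
  refine hΦ.dvd_of_forall_irreducible_dvd fun q hq hqΦ => ?_
  by_contra hqG
  have hqGA : q * G ∣ A := ((hq.coprime_iff_not_dvd).2 hqG).mul_dvd (hqΦ.trans hΦA) hGA
  have hle := natDegree_le_of_dvd hqGA hA
  rw [natDegree_mul hq.ne_zero (ne_zero_of_dvd_ne_zero hA hGA)] at hle
  have := hdeg q hq hqΦ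
  omega

theorem natDegree_eq_orderOf_two_of_dvd_cyclotomic {n : ℕ} (hn : Odd n) {q : (ZMod 2)[X]}
    (hq : Irreducible q) (hqΦ : q ∣ cyclotomic n (ZMod 2)) :
    q.natDegree = orderOf (2 : ZMod n) := by
  rw [natDegree_of_dvd_cyclotomic_of_irreducible (p := 2) (f := 1) (by simp)
    (Nat.coprime_two_left.2 hn) hqΦ hq, ← orderOf_units, ZMod.coe_unitOfCoprime]
  simp

theorem coeff_geom_sum_X_pow_mul {R : Type*} [Semiring R] {p k n : ℕ} {Q : R[X]}
    (hQ : Q.natDegree < p) (hn : n < p * k) :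
    ((∑ i ∈ range k, (X ^ p) ^ i) * Q).coeff n = Q.coeff (n % p) := by
  have hp : 0 < p := by omega
  rw [Finset.sum_mul, finsetSum_coeff, Finset.sum_eq_single (n / p)]
  · rw [← pow_mul, coeff_X_pow_mul', if_pos (Nat.mul_div_le n p), ← Nat.mod_eq_sub_mul_div]
  · intro i _ hi
    rw [← pow_mul, coeff_X_pow_mul']
    split_ifs with hle
    · have hlt : i < n / p := lt_of_le_of_ne ((Nat.le_div_iff_mul_le hp).2 (by linarith)) hi
      have := (Nat.le_div_iff_mul_le hp).1 hlt
      rw [Nat.succ_mul, mul_comm] at this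
      exact coeff_eq_zero_of_natDegree_lt (by omega)
    · rfl
  · exact fun h => absurd (mem_range.2 (Nat.div_lt_of_lt_mul hn)) h

end Polynomial

theorem coeff_genPoly {T n : ℕ} (s : ℕ → ZMod 2) (hn : n < T) :
    (genPoly T s).coeff n = s n := by
  simp [genPoly, hn]

theorem natDegree_genPoly_lt {T : ℕ} (s : ℕ → ZMod 2) (hT : 0 < T) :
    (genPoly T s).natDegree < T := by
  refine Nat.lt_of_le_pred hT (natDegree_sum_le_of_forall_le _ _ fun i hi => ?_)
  exact (natDegree_C_mul_X_pow_le _ _).trans (Nat.le_pred_of_lt (mem_range.1 hi))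

theorem cyclotomic_dvd_genPoly_of_LC_lt {n : ℕ} (hn : Odd n) {t : ℕ → ZMod 2}
    (hlt : LC n t < orderOf (2 : ZMod n)) : cyclotomic n (ZMod 2) ∣ genPoly n t := by
  have : NeZero (n : ZMod 2) :=
    ⟨by rw [Ne, ZMod.natCast_eq_zero_iff_even, Nat.not_even_iff_odd]; exact hn⟩
  have hXne : (X ^ n - 1 : (ZMod 2)[X]) ≠ 0 := by
    simpa using X_pow_sub_C_ne_zero (R := ZMod 2) hn.pos 1
  have hXdeg : (X ^ n - 1 : (ZMod 2)[X]).natDegree = n := by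
    simpa using natDegree_X_pow_sub_C (n := n) (r := (1 : ZMod 2))
  refine (dvd_of_natDegree_lt_add hXne (squarefree_cyclotomic _ _)
    (cyclotomic.dvd_X_pow_sub_one _ _) (EuclideanDomain.gcd_dvd_left _ _)
    (fun q hq hqΦ => (natDegree_eq_orderOf_two_of_dvd_cyclotomic hn hq hqΦ).ge) ?_).trans
    (EuclideanDomain.gcd_dvd_right _ _)
  rw [hXdeg]
  unfold LC at hlt
  omega

theorem exists_eq_comp_mod_of_cyclotomic_dvd_genPoly {p : ℕ} (hp : p.Prime) {t : ℕ → ZMod 2}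
    (hdvd : cyclotomic (p ^ 2) (ZMod 2) ∣ genPoly (p ^ 2) t) :
    ∃ c : ℕ → ZMod 2, ∀ n < p ^ 2, t n = c (n % p) := by
  obtain ⟨R, hR⟩ := hdvd
  have hRdeg : R.natDegree < p := by
    rcases eq_or_ne R 0 with rfl | hR0
    · simpa using hp.pos
    have hdeg := natDegree_genPoly_lt t (pow_pos hp.pos 2)
    rw [hR, natDegree_mul (cyclotomic_ne_zero _ _) hR0, natDegree_cyclotomic,
      Nat.totient_prime_pow hp two_pos, show 2 - 1 = 1 from rfl, pow_one] at hdeg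
    have hsq : p ^ 2 = p * (p - 1) + p := by
      rw [← Nat.mul_add_one, Nat.sub_add_cancel hp.one_le, sq]
    omega
  refine ⟨R.coeff, fun n hn => ?_⟩
  rw [← coeff_genPoly t hn, hR, cyclotomic_prime_pow_eq_geom_sum hp, pow_one]
  exact coeff_geom_sum_X_pow_mul hRdeg (by rwa [sq] at hn)

def column (p j : ℕ) : Finset ℕ := {n ∈ range (p ^ 2) | n % p = j}

theorem pow_mod_mem_Dcl_iff {p f g j l m : ℕ} (hg : IsOfFinOrder (g : ZMod (p ^ j)))
    (hord : orderOf (g : ZMod (p ^ j)) = f * p ^ (j - 1) * ((p - 1) / f)) (he : 0 < (p - 1) / f) :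
    g ^ m % p ^ j ∈ Dcl p f g j l ↔ l ≡ m [MOD f * p ^ (j - 1)] := by
  simp only [Dcl, mem_image, mem_range, pow_mod_eq_pow_mod_iff hg, hord, Nat.mul_assoc _ f]
  exact Nat.exists_lt_add_mul_modEq_iff he

section Sequence

variable {p f g b : ℕ} [hp : Fact p.Prime]

theorem pos_of_dvd_sub_one (hfd : f ∣ p - 1) : 0 < f :=
  Nat.pos_of_dvd_of_pos hfd (by have := hp.out.two_le; omega)

theorem div_pos_of_dvd_sub_one (hfd : f ∣ p - 1) : 0 < (p - 1) / f :=
  Nat.div_pos (Nat.le_of_dvd (by have := hp.out.two_le; omega) hfd) (pos_of_dvd_sub_one hfd)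

theorem card_column {j : ℕ} (hj : j < p) : #(column p j) = p := by
  have hcol : column p j = {n ∈ range (p ^ 2) | n ≡ j [MOD p]} := by
    simp only [column, Nat.ModEq, Nat.mod_eq_of_lt hj]
  rw [hcol, ← Nat.count_eq_card_filter_range, Nat.count_modEq_card _ hp.out.pos, sq,
    Nat.mul_mod_left, Nat.mul_div_cancel _ hp.out.pos]
  simp

theorem not_dvd_pow_mod_of_isPrimRoot (hg : isPrimRoot g (p ^ 2)) (m : ℕ) {n : ℕ}
    (hn : p ∣ n) :
    ¬ p ∣ g ^ m % n := by
  rw [Nat.dvd_mod_iff hn]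
  exact fun h => natCast_ne_zero_of_isPrimRoot hg
    ((ZMod.natCast_eq_zero_iff g p).2 (hp.out.dvd_of_dvd_pow h))

theorem pow_mod_mem_Dcl_one_iff (hfd : f ∣ p - 1) (hg : isPrimRoot g (p ^ 2)) {l m : ℕ} :
    g ^ m % p ∈ Dcl p f g 1 l ↔ l ≡ m [MOD f] := by
  have hfin : IsOfFinOrder (g : ZMod (p ^ 1)) := by
    rw [pow_one]; exact isOfFinOrder_zmod_of_isPrimRoot hg
  simpa using pow_mod_mem_Dcl_iff (m := m) (l := l) hfin
    (by rw [pow_one, orderOf_zmod_of_isPrimRoot hg, Nat.sub_self, pow_zero, mul_one,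
      Nat.mul_div_cancel' hfd])
    (div_pos_of_dvd_sub_one hfd)

theorem pow_mod_mem_Dcl_two_iff (hfd : f ∣ p - 1) (hg : isPrimRoot g (p ^ 2)) {l m : ℕ} :
    g ^ m % p ^ 2 ∈ Dcl p f g 2 l ↔ l ≡ m [MOD p * f] := by
  simpa [mul_comm] using pow_mod_mem_Dcl_iff (m := m) (l := l)
    (isOfFinOrder_zmod_sq_of_isPrimRoot hg)
    (by rw [orderOf_zmod_sq_of_isPrimRoot hg, Nat.mul_assoc, Nat.mul_left_comm,
      Nat.mul_div_cancel' hfd]; norm_num)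
    (div_pos_of_dvd_sub_one hfd)

theorem not_dvd_of_mem_Dcl (hg : isPrimRoot g (p ^ 2)) {j l u : ℕ} (hj : j ≠ 0)
    (hu : u ∈ Dcl p f g j l) : ¬ p ∣ u := by
  obtain ⟨k, -, rfl⟩ := mem_image.1 hu
  exact not_dvd_pow_mod_of_isPrimRoot hg _ (dvd_pow_self p hj)

theorem pow_mod_mem_C1_iff (hfd : f ∣ p - 1) (hg : isPrimRoot g (p ^ 2)) (m : ℕ) :
    g ^ m % p ^ 2 ∈ C1 p f g b ↔ ∃ i < p * f / 2, i + b ≡ m [MOD p * f] := by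
  have hndvd := not_dvd_pow_mod_of_isPrimRoot hg m (dvd_pow_self p two_ne_zero)
  simp only [C1, mem_union, mem_biUnion, mem_image, mem_range, mem_singleton,
    pow_mod_mem_Dcl_two_iff hfd hg, Nat.ModEq, Nat.mod_mod]
  constructor
  · rintro ((⟨_, _, v, _, hv⟩ | h) | h0)
    · exact absurd (hv ▸ dvd_mul_right p v) hndvd
    · exact h
    · exact absurd (h0 ▸ dvd_zero p) hndvd
  · exact fun h => Or.inl (Or.inr h)

theorem mul_pow_mod_mem_C1_iff (hfd : f ∣ p - 1) (hg : isPrimRoot g (p ^ 2)) (m : ℕ) :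
    p * (g ^ m % p) ∈ C1 p f g b ↔ ∃ i < f / 2, i + b ≡ m [MOD f] := by
  have hndvd := not_dvd_pow_mod_of_isPrimRoot hg m (dvd_refl p)
  simp only [C1, mem_union, mem_biUnion, mem_image, mem_range, mem_singleton,
    Nat.mul_left_cancel_iff hp.out.pos, exists_eq_right, pow_mod_mem_Dcl_one_iff hfd hg,
    Nat.ModEq, Nat.mod_mod, mul_eq_zero, hp.out.ne_zero, false_or]
  constructor
  · rintro ((h | ⟨_, _, hmem⟩) | h0)
    · exact h
    · exact absurd (dvd_mul_right p _) (not_dvd_of_mem_Dcl hg two_ne_zero hmem)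
    · exact absurd (h0 ▸ dvd_zero p) hndvd
  · exact fun h => Or.inl (Or.inl h)

theorem exists_pow_mod_eq (hg : isPrimRoot g (p ^ 2)) {j : ℕ} (hj0 : j ≠ 0) (hjp : j < p) :
    ∃ m, g ^ m % p = j := by
  have hζ : IsPrimitiveRoot (g : ZMod p) (p - 1) :=
    orderOf_zmod_of_isPrimRoot hg ▸ IsPrimitiveRoot.orderOf _
  have : NeZero (p - 1) := ⟨by have := hp.out.two_le; omega⟩
  have hj : (j : ZMod p) ≠ 0 := by
    rw [Ne, ZMod.natCast_eq_zero_iff]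
    exact Nat.not_dvd_of_pos_of_lt (by omega) hjp
  obtain ⟨m, -, hm⟩ := hζ.eq_pow_of_pow_eq_one (ZMod.pow_card_sub_one_eq_one hj)
  refine ⟨m, ?_⟩
  rw [← Nat.mod_eq_of_lt hjp, ← ZMod.natCast_eq_natCast_iff', Nat.cast_pow, hm]

theorem card_column_zero_filter_C1_eq (hfd : f ∣ p - 1) (hg : isPrimRoot g (p ^ 2)) :
    #{n ∈ column p 0 | n ∈ C1 p f g b} =
      #{m ∈ range (p - 1) | ∃ i < f / 2, i + b ≡ m [MOD f]} + 1 := by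
  have h0col : 0 ∈ column p 0 := by simp [column, hp.out.pos]
  have hmaps : ∀ m ∈ range (p - 1), p * (g ^ m % p) ∈ (column p 0).erase 0 := by
    intro m _
    have hpos : 0 < g ^ m % p := Nat.pos_of_ne_zero fun h =>
      not_dvd_pow_mod_of_isPrimRoot hg m (dvd_refl p) (h ▸ dvd_zero p)
    simp only [mem_erase, column, mem_filter, mem_range, Nat.mul_mod_right, sq]
    exact ⟨Nat.mul_ne_zero hp.out.ne_zero hpos.ne',
      Nat.mul_lt_mul_of_pos_left (Nat.mod_lt _ hp.out.pos) hp.out.pos, trivial⟩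
  have hinj : Set.InjOn (fun m => p * (g ^ m % p)) (range (p - 1)) := by
    intro m hm m' hm' h
    simp only [coe_range, Set.mem_Iio] at hm hm'
    have := (pow_mod_eq_pow_mod_iff (isOfFinOrder_zmod_of_isPrimRoot hg)).1
      (Nat.eq_of_mul_eq_mul_left hp.out.pos h)
    rw [orderOf_zmod_of_isPrimRoot hg] at this
    exact this.eq_of_lt_of_lt hm hm'
  have hcard : #((column p 0).erase 0) ≤ #(range (p - 1)) := by
    rw [card_erase_of_mem h0col, card_column hp.out.pos, card_range]
  rw [← insert_erase h0col, filter_insert, if_pos (by simp [C1]),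
    card_insert_of_notMem (by simp), ← card_filter_comp_of_injOn hmaps hinj hcard]
  simp only [mul_pow_mod_mem_C1_iff hfd hg]

theorem card_column_zero_filter_C1 (hf : Even f) (hfd : f ∣ p - 1)
    (hg : isPrimRoot g (p ^ 2)) : #{n ∈ column p 0 | n ∈ C1 p f g b} = (p + 1) / 2 := by
  have hperiodic : Function.Periodic (fun m => ∃ i < f / 2, i + b ≡ m [MOD f]) f := by
    intro m
    simp only [Nat.ModEq, Nat.add_mod_right]
  have hfe : f * ((p - 1) / f) = p - 1 := Nat.mul_div_cancel' hfd
  rw [card_column_zero_filter_C1_eq hfd hg, ← Nat.count_eq_card_filter_range, ← hfe,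
    Nat.count_mul_of_periodic hperiodic,
    Nat.count_eq_card_filter_range, Nat.card_filter_exists_add_modEq b (Nat.div_le_self f 2)]
  obtain ⟨f', rfl⟩ := hf
  set e := (p - 1) / (f' + f')
  have hq : e * f' * 2 = p - 1 := by rw [← hfe]; ring
  rw [show (f' + f') / 2 = f' by omega]
  have := hp.out.pos
  generalize e * f' = q at hq ⊢
  omega

theorem card_column_filter_C1_eq (hfd : f ∣ p - 1) (hg : isPrimRoot g (p ^ 2)) {j m₀ : ℕ}
    (hm₀ : g ^ m₀ % p = j) (hjp : j < p) :
    #{n ∈ column p j | n ∈ C1 p f g b} =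
      #{r ∈ range p | ∃ i < p * f / 2, i + b ≡ m₀ + r * (p - 1) [MOD p * f]} := by
  have hmaps : ∀ r ∈ range p, g ^ (m₀ + r * (p - 1)) % p ^ 2 ∈ column p j := by
    intro r _
    simp only [column, mem_filter, mem_range]
    refine ⟨Nat.mod_lt _ (pow_pos hp.out.pos 2), ?_⟩
    rw [Nat.mod_mod_of_dvd _ (dvd_pow_self p two_ne_zero), ← hm₀,
      pow_mod_eq_pow_mod_iff (isOfFinOrder_zmod_of_isPrimRoot hg), orderOf_zmod_of_isPrimRoot hg]
    exact Nat.add_mul_mod_self_right m₀ r (p - 1)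
  have hinj : Set.InjOn (fun r => g ^ (m₀ + r * (p - 1)) % p ^ 2) (range p) := by
    intro r hr r' hr' h
    simp only [coe_range, Set.mem_Iio] at hr hr'
    rw [pow_mod_eq_pow_mod_iff (isOfFinOrder_zmod_sq_of_isPrimRoot hg),
      orderOf_zmod_sq_of_isPrimRoot hg] at h
    have := hp.out.two_le
    exact ((Nat.ModEq.add_left_cancel' m₀ h).mul_right_cancel' (by omega)).eq_of_lt_of_lt hr hr'
  rw [← card_filter_comp_of_injOn hmaps hinj (by rw [card_column hjp, card_range])]
  simp only [pow_mod_mem_C1_iff hfd hg]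

theorem card_column_filter_C1_mem_Icc_of_ne_zero (hodd : Odd p) (hf : Even f)
    (hfd : f ∣ p - 1) (hg : isPrimRoot g (p ^ 2)) {j : ℕ} (hj0 : j ≠ 0) (hjp : j < p) :
    #{n ∈ column p j | n ∈ C1 p f g b} ∈ Icc ((p - 1) / 2) ((p + 1) / 2) := by
  obtain ⟨m₀, hm₀⟩ := exists_pow_mod_eq hg hj0 hjp
  have hf0 := pos_of_dvd_sub_one hfd
  have hcop : p.Coprime ((p - 1) / f) := Nat.coprime_of_lt_prime (div_pos_of_dvd_sub_one hfd).ne'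
    (by have := Nat.div_le_self (p - 1) f; have := hp.out.two_le; omega) hp.out
  have hhalf : p * f / 2 / f = (p - 1) / 2 := by
    obtain ⟨f', rfl⟩ := hf
    obtain ⟨n, rfl⟩ := hodd
    rw [show (2 * n + 1) * (f' + f') / 2 = (f' + f') * n + f' by
      rw [Nat.div_eq_of_eq_mul_left two_pos]; ring, Nat.mul_add_div (by omega),
      Nat.div_eq_of_lt (by omega)]
    omega
  have hexponents :
      #{r ∈ range p | ∃ i < p * f / 2, i + b ≡ m₀ + r * (p - 1) [MOD p * f]} =
        #{i ∈ range (p * f / 2) | i + b ≡ m₀ [MOD f]} := by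
    conv_lhs => rw [← Nat.mul_div_cancel' hfd]
    rw [Nat.card_filter_add_mul_mul_eq hcop hf0 m₀
        (fun y => ∃ i < p * f / 2, i + b ≡ y [MOD p * f])
        fun y => by simp only [Nat.ModEq, Nat.mod_mod],
      Nat.card_filter_modEq_exists_add_modEq (dvd_mul_left f p) (Nat.div_le_self _ 2)]
  have := Nat.card_filter_add_modEq_mem_Icc hf0 (p * f / 2) b m₀
  rw [hhalf, mem_Icc] at this
  rw [card_column_filter_C1_eq hfd hg hm₀ hjp, hexponents, mem_Icc]
  omega

theorem card_column_filter_C1_mem_Icc (hodd : Odd p) (hf : Even f) (hfd : f ∣ p - 1)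
    (hg : isPrimRoot g (p ^ 2)) {j : ℕ} (hjp : j < p) :
    #{n ∈ column p j | n ∈ C1 p f g b} ∈ Icc ((p - 1) / 2) ((p + 1) / 2) := by
  rcases eq_or_ne j 0 with rfl | hj0
  · rw [card_column_zero_filter_C1 hf hfd hg, mem_Icc]
    omega
  · exact card_column_filter_C1_mem_Icc_of_ne_zero hodd hf hfd hg hj0 hjp

theorem le_card_column_filter_ne_seqS (hodd : Odd p) (hf : Even f) (hfd : f ∣ p - 1)
    (hg : isPrimRoot g (p ^ 2)) (c : ZMod 2) {j : ℕ} (hjp : j < p) :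
    (p - 1) / 2 ≤ #{n ∈ column p j | c ≠ seqS p f g b n} := by
  have hC := mem_Icc.1 (card_column_filter_C1_mem_Icc (b := b) hodd hf hfd hg hjp)
  have hseq : ∀ n ∈ column p j, seqS p f g b n = if n ∈ C1 p f g b then 1 else 0 := by
    intro n hn
    rw [seqS, Nat.mod_eq_of_lt (mem_range.1 (mem_filter.1 hn).1)]
  rcases (by decide : ∀ c : ZMod 2, c = 0 ∨ c = 1) c with rfl | rfl
  · have hset :
        {n ∈ column p j | 0 ≠ seqS p f g b n} = {n ∈ column p j | n ∈ C1 p f g b} :=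
      filter_congr fun n hn => by rw [hseq n hn]; split_ifs <;> simp_all
    rw [hset]
    exact hC.1
  · have hset :
        {n ∈ column p j | 1 ≠ seqS p f g b n} = {n ∈ column p j | n ∉ C1 p f g b} :=
      filter_congr fun n hn => by rw [hseq n hn]; split_ifs <;> simp_all
    have hsum := card_filter_add_card_filter_not (s := column p j) (· ∈ C1 p f g b)
    rw [card_column hjp] at hsum
    rw [hset]
    omega

theorem le_card_filter_ne_seqS (hodd : Odd p) (hf : Even f) (hfd : f ∣ p - 1)
    (hg : isPrimRoot g (p ^ 2)) {t c : ℕ → ZMod 2} (ht : ∀ n < p ^ 2, t n = c (n % p)) :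
    p * ((p - 1) / 2) ≤ #{n ∈ range (p ^ 2) | t n ≠ seqS p f g b n} := by
  rw [card_eq_sum_card_fiberwise (f := (· % p)) (t := range p)
    fun n _ => mem_range.2 (Nat.mod_lt n hp.out.pos)]
  calc p * ((p - 1) / 2) = ∑ _j ∈ range p, (p - 1) / 2 := by simp
    _ ≤ _ := sum_le_sum fun j hj => ?_
  have hfiber : {n ∈ {n ∈ range (p ^ 2) | t n ≠ seqS p f g b n} | n % p = j} =
      {n ∈ column p j | c j ≠ seqS p f g b n} := by
    ext n
    simp only [column, mem_filter, mem_range]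
    constructor
    · rintro ⟨⟨hn, hne⟩, rfl⟩
      exact ⟨⟨hn, rfl⟩, ht n hn ▸ hne⟩
    · rintro ⟨⟨hn, rfl⟩, hne⟩
      exact ⟨⟨hn, (ht n hn).symm ▸ hne⟩, rfl⟩
  rw [hfiber]
  exact le_card_column_filter_ne_seqS hodd hf hfd hg (c j) (mem_range.1 hj)

theorem orderOf_two_mul_le_LC (hodd : Odd p) (hf : Even f) (hfd : f ∣ p - 1)
    (hg : isPrimRoot g (p ^ 2)) (h2 : (2 : ZMod (p ^ 2)) ^ (p - 1) ≠ 1) {t : ℕ → ZMod 2}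
    (ht : #{n ∈ range (p ^ 2) | t n ≠ seqS p f g b n} < (p ^ 2 - p) / 2) :
    orderOf (2 : ZMod p) * p ≤ LC (p ^ 2) t := by
  refine le_of_not_gt fun hlt => ?_
  rw [← orderOf_two_zmod_sq hodd h2] at hlt
  obtain ⟨c, hc⟩ := exists_eq_comp_mod_of_cyclotomic_dvd_genPoly hp.out
    (cyclotomic_dvd_genPoly_of_LC_lt hodd.pow hlt)
  have hcount := le_card_filter_ne_seqS (b := b) hodd hf hfd hg hc
  obtain ⟨n, rfl⟩ := hodd
  have hsub : (2 * n + 1) ^ 2 - (2 * n + 1) = 2 * ((2 * n + 1) * n) :=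
    Nat.sub_eq_of_eq_add (by ring)
  rw [show (2 * n + 1 - 1) / 2 = n by omega] at hcount
  rw [hsub] at ht
  omega

end Sequence

theorem stmt8_general (p f g b : ℕ) (hp : p.Prime) (hodd : Odd p)
    (hf : Even f) (hfd : f ∣ p - 1)
    (hg : isPrimRoot g (p ^ 2))
    (h2 : (2 : ZMod (p ^ 2)) ^ (p - 1) ≠ 1) :
    ∀ k : ℕ, k < (p ^ 2 - p) / 2 →
      orderOf (2 : ZMod p) * p ≤ errLC (p ^ 2) k (seqS p f g b) := by
  have := Fact.mk hp
  intro k hk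
  refine le_csInf ⟨_, seqS p f g b, by simp, rfl⟩ ?_
  rintro L ⟨t, ht, rfl⟩
  exact orderOf_two_mul_le_LC hodd hf hfd hg h2 (ht.trans_lt hk)

/-- if `2^(p-1) ≢ 1 (mod p²)` and `λ` is the order of `2` mod `p`, then
`LC_k((s_n)) ≥ λ·p` for all `0 ≤ k < (p²-p)/2`. -/
theorem stmt8 (p f g b : ℕ) (hp : p.Prime) (hodd : Odd p)
    (hf : Even f) (hfpos : 0 < f) (hfd : f ∣ p - 1)
    (hg : isPrimRoot g (p ^ 2)) (hqg : qp p g = 1)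
    (hb : b < f * p)
    (h2 : (2 : ZMod (p ^ 2)) ^ (p - 1) ≠ 1) :
    ∀ k : ℕ, k < (p ^ 2 - p) / 2 →
      orderOf (2 : ZMod p) * p ≤ errLC (p ^ 2) k (seqS p f g b) :=
  stmt8_general p f g b hp hodd hf hfd hg h2
end

section
/- Let p be an odd prime and g a primitive root modulo p² with Fermat quotient q_p(g) = 1. Then for every l with 0 ≤ l < p, the set D_l = {u : 0 ≤ u < p², gcd(u,p) = 1, q_p(u) = l} equals {g^{l+ip} mod p² : 0 ≤ i < p−1}. -/
open Polynomial Finset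

lemma qp_lt (p u : ℕ) (hp : 0 < p) : qp p u < p := by
  unfold qp; split
  · exact hp
  · exact Nat.mod_lt _ hp

lemma pp_sq_zero (p : ℕ) : ((p : ZMod (p ^ 2)) * p) = 0 := by
  have h : ((p ^ 2 : ℕ) : ZMod (p ^ 2)) = 0 := ZMod.natCast_self _
  push_cast at h
  linear_combination h

lemma one_add_p_pow (p n : ℕ) : ((1 : ZMod (p ^ 2)) + p) ^ n = 1 + n * p := by
  induction n with
  | zero => simp
  | succ n ih =>
    push_cast
    linear_combination (1 + (p : ZMod (p ^ 2))) * ih + (n : ZMod (p ^ 2)) * pp_sq_zero p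

lemma natCast_mul_p (p e : ℕ) :
    (p : ZMod (p ^ 2)) * e = (p : ZMod (p ^ 2)) * ((e % p : ℕ)) := by
  conv_lhs => rw [← Nat.div_add_mod e p]
  push_cast
  linear_combination ((e / p : ℕ) : ZMod (p ^ 2)) * pp_sq_zero p

lemma qp_spec (p u : ℕ) (hp : p.Prime) (hu : u % p ≠ 0) :
    ((u : ZMod (p ^ 2))) ^ (p - 1) = 1 + p * (qp p u) := by
  haveI : Fact p.Prime := ⟨hp⟩
  have hu0 : ¬ p ∣ u := by intro h; exact hu (Nat.mod_eq_zero_of_dvd h)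
  have hune : (u : ZMod p) ≠ 0 := by
    simpa [ZMod.natCast_eq_zero_iff] using hu0
  have hferm : (u : ZMod p) ^ (p - 1) = 1 := ZMod.pow_card_sub_one_eq_one hune
  have h1 : 1 ≤ u ^ (p - 1) := Nat.one_le_iff_ne_zero.mpr
    (pow_ne_zero _ (by rintro rfl; exact hu (Nat.zero_mod p)))
  have hdvd : p ∣ u ^ (p - 1) - 1 := by
    have h2 : ((u ^ (p - 1) - 1 : ℕ) : ZMod p) = 0 := by
      rw [Nat.cast_sub h1]
      push_cast
      rw [hferm]; ring
    exact (ZMod.natCast_eq_zero_iff _ _).mp h2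
  set k := (u ^ (p - 1) - 1) / p with hk
  have hk1 : u ^ (p - 1) = 1 + p * k := by
    have h3 : p * k = u ^ (p - 1) - 1 := Nat.mul_div_cancel' hdvd
    rw [h3]
    exact (Nat.add_sub_cancel' h1).symm
  have hq : qp p u = k % p := by simp [qp, hu, hk]
  have hcast : ((u : ZMod (p ^ 2))) ^ (p - 1) = 1 + p * (k : ℕ) := by
    have h4 := congrArg (fun m : ℕ => (m : ZMod (p ^ 2))) hk1
    push_cast at h4
    exact h4
  rw [hcast, hq, natCast_mul_p]

lemma qp_unique (p a b : ℕ) (hp : 0 < p) (ha : a < p) (hb : b < p)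
    (h : (1 + (p : ZMod (p ^ 2)) * a) = 1 + (p : ZMod (p ^ 2)) * b) : a = b := by
  have h2 : ((p * a : ℕ) : ZMod (p ^ 2)) = ((p * b : ℕ) : ZMod (p ^ 2)) := by
    push_cast
    linear_combination h
  have h3 := (ZMod.natCast_eq_natCast_iff _ _ _).mp h2
  have h4 : p * a < p ^ 2 := by rw [pow_two]; exact mul_lt_mul_of_pos_left ha hp
  have h5 : p * b < p ^ 2 := by rw [pow_two]; exact mul_lt_mul_of_pos_left hb hp
  have h6 : p * a % p ^ 2 = p * b % p ^ 2 := h3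
  rw [Nat.mod_eq_of_lt h4, Nat.mod_eq_of_lt h5] at h6
  exact Nat.eq_of_mul_eq_mul_left hp h6


/-- for a primitive root `g` mod `p²` with `q_p(g) = 1`,
`D_l = {g^(l+ip) mod p² : 0 ≤ i < p-1}` for all `0 ≤ l < p`. -/
theorem stmt10 (p g : ℕ) (hp : p.Prime) (hodd : Odd p)
    (hg : isPrimRoot g (p ^ 2)) (hqg : qp p g = 1) :
    ∀ l : ℕ, l < p →
      Dq p l = (Finset.range (p - 1)).image (fun i => g ^ (l + i * p) % p ^ 2) := by
  intro l hl
  haveI : Fact p.Prime := ⟨hp⟩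
  have hp1 : 1 < p := hp.one_lt
  have hp2 : 0 < p ^ 2 := by positivity
  haveI : NeZero (p ^ 2) := ⟨by positivity⟩
  have htot : Nat.totient (p ^ 2) = p * (p - 1) := by
    rw [Nat.totient_prime_pow hp (by norm_num : 0 < 2)]
    norm_num
  have hord : orderOf (g : ZMod (p ^ 2)) = p * (p - 1) := by
    have h0 : orderOf (g : ZMod (p ^ 2)) = Nat.totient (p ^ 2) := hg
    rw [h0, htot]
  have hppos : 0 < p * (p - 1) := by
    have : 0 < p - 1 := by omega
    positivity
  have hfin : IsOfFinOrder (g : ZMod (p ^ 2)) := by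
    rw [← orderOf_pos_iff, hord]; exact hppos
  have hgu : IsUnit (g : ZMod (p ^ 2)) := hfin.isUnit
  have hgp : g % p ≠ 0 := by
    intro h
    have hdvd : p ∣ g := Nat.dvd_of_mod_eq_zero h
    have hco : Nat.Coprime g (p ^ 2) := (ZMod.isUnit_iff_coprime g (p ^ 2)).mp hgu
    rw [Nat.Coprime] at hco
    have h1 : p ∣ Nat.gcd g (p ^ 2) := Nat.dvd_gcd hdvd (dvd_pow_self p (by norm_num))
    rw [hco] at h1
    have := Nat.dvd_one.mp h1
    omega
  have hg1 : (g : ZMod (p ^ 2)) ^ (p - 1) = 1 + p := by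
    have h0 := qp_spec p g hp hgp
    rw [hqg] at h0
    simpa using h0
  -- key computation
  have hpow : ∀ e : ℕ, ((g : ZMod (p ^ 2)) ^ e) ^ (p - 1) = 1 + (p : ZMod (p ^ 2)) * ((e % p : ℕ)) := by
    intro e
    rw [← pow_mul, mul_comm e (p - 1), pow_mul, hg1, one_add_p_pow, ← natCast_mul_p]
    ring
  -- membership criterion for g^e % p^2
  have hmem : ∀ e : ℕ, (g ^ e % p ^ 2) < p ^ 2 ∧ (g ^ e % p ^ 2) % p ≠ 0 ∧
      qp p (g ^ e % p ^ 2) = e % p := by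
    intro e
    have hlt : g ^ e % p ^ 2 < p ^ 2 := Nat.mod_lt _ hp2
    have hmp : (g ^ e % p ^ 2) % p ≠ 0 := by
      rw [Nat.mod_mod_of_dvd _ (dvd_pow_self p (by norm_num))]
      intro h
      exact hgp (Nat.mod_eq_zero_of_dvd (hp.dvd_of_dvd_pow (Nat.dvd_of_mod_eq_zero h)))
    have hcast : ((g ^ e % p ^ 2 : ℕ) : ZMod (p ^ 2)) = (g : ZMod (p ^ 2)) ^ e := by
      rw [ZMod.natCast_mod]
      push_cast
      ring
    have hq1 := qp_spec p (g ^ e % p ^ 2) hp hmp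
    rw [hcast, hpow e] at hq1
    refine ⟨hlt, hmp, ?_⟩
    exact qp_unique p (qp p _) (e % p) hp.pos (qp_lt _ _ hp.pos) (Nat.mod_lt _ hp.pos) hq1.symm
  ext u
  simp only [Dq, Finset.mem_filter, Finset.mem_range, Finset.mem_image]
  constructor
  · rintro ⟨hu2, hup, hql⟩
    -- u is a power of g
    have huu : IsUnit (u : ZMod (p ^ 2)) := by
      rw [ZMod.isUnit_iff_coprime]
      have : ¬ p ∣ u := by intro h; exact hup (Nat.mod_eq_zero_of_dvd h)
      exact (Nat.coprime_comm.mp (hp.coprime_iff_not_dvd.mpr this)).pow_right 2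
    have hordu : orderOf hgu.unit = p * (p - 1) := by
      rw [← orderOf_units, hgu.unit_spec, hord]
    have hcardU : Nat.card (ZMod (p ^ 2))ˣ = p * (p - 1) := by
      rw [Nat.card_eq_fintype_card, ZMod.card_units_eq_totient, htot]
    have htop : huu.unit ∈ Subgroup.zpowers hgu.unit := by
      have hceq : Nat.card (Subgroup.zpowers hgu.unit) = Nat.card (ZMod (p ^ 2))ˣ := by
        rw [Nat.card_zpowers, hordu, hcardU]
      have := (Subgroup.card_eq_iff_eq_top _).mp hceq
      rw [this]
      trivial
    obtain ⟨t0, ht0⟩ := Submonoid.mem_powers_iff _ _ |>.mp (mem_powers_iff_mem_zpowers.mpr htop)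
    set t := t0 % (p * (p - 1)) with ht
    have htlt : t < p * (p - 1) := Nat.mod_lt _ hppos
    have hgt : (g : ZMod (p ^ 2)) ^ t = (u : ZMod (p ^ 2)) := by
      have h1 : hgu.unit ^ t = huu.unit := by
        rw [ht, ← hordu, pow_mod_orderOf, ht0]
      have h2 := congrArg (Units.val) h1
      rw [Units.val_pow_eq_pow_val, hgu.unit_spec, huu.unit_spec] at h2
      exact h2
    -- compute t % p = l
    have hq1 := qp_spec p u hp hup
    rw [hql, ← hgt, hpow t] at hq1
    have htl : t % p = l := qp_unique p (t % p) l hp.pos (Nat.mod_lt _ hp.pos) hl hq1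
    refine ⟨t / p, ?_, ?_⟩
    · -- t / p < p - 1
      have ha : t / p * p ≤ t := Nat.div_mul_le_self t p
      by_contra hcon
      push_neg at hcon
      have hb : (p - 1) * p ≤ t / p * p := Nat.mul_le_mul_right p hcon
      have hc : p * (p - 1) = (p - 1) * p := Nat.mul_comm _ _
      omega
    · -- g ^ (l + t / p * p) % p ^ 2 = u
      have he : l + t / p * p = t := by
        rw [← htl]
        exact Nat.mod_add_div' t p
      rw [he]
      have h3 : ((g ^ t : ℕ) : ZMod (p ^ 2)) = (u : ZMod (p ^ 2)) := by
        push_cast; exact hgt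
      have h4 := (ZMod.natCast_eq_natCast_iff _ _ _).mp h3
      have h5 : g ^ t % p ^ 2 = u % p ^ 2 := h4
      rw [Nat.mod_eq_of_lt hu2] at h5
      exact h5
  · rintro ⟨i, hi, rfl⟩
    obtain ⟨h1, h2, h3⟩ := hmem (l + i * p)
    refine ⟨h1, h2, ?_⟩
    rw [h3, Nat.add_mul_mod_self_right, Nat.mod_eq_of_lt hl]
end

section
/- Let p be an odd prime, f even with f ∣ p−1, and g a primitive root modulo p². Then for every l with 0 ≤ l < fp, the set of residues modulo p of the elements of D_l^{(p²,f)} equals D_{(l mod f)}^{(p,f)}. -/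
open Polynomial Finset

lemma pow_mod_eq_of_modEq (p g : ℕ) (hp : p.Prime) (hg1 : (g : ZMod p) ^ (p - 1) = 1)
    {a b : ℕ} (h : a ≡ b [MOD p - 1]) : g ^ a % p = g ^ b % p := by
  haveI := Fact.mk hp
  have hdvd : orderOf (g : ZMod p) ∣ p - 1 := orderOf_dvd_of_pow_eq_one hg1
  have h' : a ≡ b [MOD orderOf (g : ZMod p)] := h.of_dvd hdvd
  have hc : (g : ZMod p) ^ a = (g : ZMod p) ^ b := by
    rw [← pow_mod_orderOf, ← pow_mod_orderOf (n := b), h']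
  have : ((g ^ a : ℕ) : ZMod p) = ((g ^ b : ℕ) : ZMod p) := by push_cast; exact hc
  exact (ZMod.natCast_eq_natCast_iff _ _ _).1 this

lemma key_modEq (p f e l k : ℕ) (hef : e * f = p - 1) (hp : 2 ≤ p) :
    l + k * f * p ≡ l % f + ((k + l / f) % e) * f [MOD p - 1] := by
  obtain ⟨q, hq⟩ : ∃ q, p = q + 1 := ⟨p - 1, by omega⟩
  have h4 : l % f + l / f * f = l := Nat.mod_add_div' l f
  have h3 : l + k * f * p = (l % f + (k + l / f) * f) + (k * f) * (p - 1) := by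
    subst hq; simp only [Nat.add_sub_cancel]
    calc l + k * f * (q + 1) = (l % f + l / f * f) + k * f * (q + 1) := by rw [h4]
      _ = (l % f + (k + l / f) * f) + (k * f) * q := by ring
  have h6 : l + k * f * p ≡ l % f + (k + l / f) * f [MOD p - 1] := by
    rw [h3]
    show (_ + _ * (p - 1)) % (p - 1) = _ % (p - 1)
    exact Nat.add_mul_mod_self_right _ _ _
  have h7 : (k + l / f) % e * f ≡ (k + l / f) * f [MOD p - 1] := by
    have := (Nat.mod_modEq (k + l / f) e).mul_right' (c := f)
    rwa [hef] at this
  exact h6.trans ((Nat.ModEq.add_left (l % f) h7).symm)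

/-- for all `0 ≤ l < fp`, the residues modulo `p` of the elements of
`D_l^{(p²,f)}` form exactly the set `D_{(l mod f)}^{(p,f)}`. -/
theorem stmt14 (p f g : ℕ) (hp : p.Prime) (hodd : Odd p)
    (hf : Even f) (hfpos : 0 < f) (hfd : f ∣ p - 1)
    (hg : isPrimRoot g (p ^ 2)) :
    ∀ l : ℕ, l < f * p →
      (Dcl p f g 2 l).image (fun u => u % p) = Dcl p f g 1 (l % f) := by
  intro l _
  haveI := Fact.mk hp
  have hp2 : 2 ≤ p := hp.two_le
  set e := (p - 1) / f with he
  have hef : e * f = p - 1 := Nat.div_mul_cancel hfd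
  have hppos : 0 < p - 1 := by omega
  have hepos : 0 < e := by
    rcases Nat.eq_zero_or_pos e with h | h
    · rw [h, zero_mul] at hef; omega
    · exact h
  -- g is a unit mod p
  have htot : 0 < Nat.totient (p ^ 2) := Nat.totient_pos.2 (by positivity)
  have hord : 0 < orderOf (g : ZMod (p ^ 2)) := by rw [hg]; exact htot
  have hgu2 : IsUnit (g : ZMod (p ^ 2)) := (orderOf_pos_iff.1 hord).isUnit
  have hgu : IsUnit (g : ZMod p) := by
    have h := hgu2.map (ZMod.castHom (dvd_pow_self p two_ne_zero) (ZMod p))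
    rwa [map_natCast] at h
  have hg0 : (g : ZMod p) ≠ 0 := hgu.ne_zero
  have hg1 : (g : ZMod p) ^ (p - 1) = 1 := ZMod.pow_card_sub_one_eq_one hg0
  have hmm : ∀ a : ℕ, g ^ a % p ^ 2 % p = g ^ a % p := fun a =>
    Nat.mod_mod_of_dvd _ (dvd_pow_self p two_ne_zero)
  simp only [Dcl, Finset.image_image]
  apply Finset.ext
  intro x
  simp only [Finset.mem_image, Finset.mem_range, Function.comp_apply, pow_one, pow_zero,
    mul_one]
  constructor
  · rintro ⟨k, hk, rfl⟩
    refine ⟨(k + l / f) % e, Nat.mod_lt _ hepos, ?_⟩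
    rw [hmm]
    norm_num
    exact (pow_mod_eq_of_modEq p g hp hg1 (key_modEq p f e l k hef hp2)).symm
  · rintro ⟨m, hm, rfl⟩
    refine ⟨(m + (e - l / f % e)) % e, Nat.mod_lt _ hepos, ?_⟩
    rw [hmm]
    norm_num
    set k := (m + (e - l / f % e)) % e with hkdef
    have h2 : (k + l / f) % e = m := by
      have hle : l / f % e < e := Nat.mod_lt _ hepos
      have step : k + l / f ≡ m [MOD e] := by
        calc k + l / f ≡ (m + (e - l / f % e)) + l / f [MOD e] :=
              Nat.ModEq.add_right _ (Nat.mod_modEq _ e)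
          _ ≡ (m + (e - l / f % e)) + l / f % e [MOD e] :=
              Nat.ModEq.add_left _ (Nat.mod_modEq _ e).symm
          _ = m + e := by omega
          _ ≡ m + 0 [MOD e] := Nat.ModEq.add_left _ ((Nat.modEq_zero_iff_dvd).2 dvd_rfl)
          _ = m := by omega
      have : (k + l / f) % e = m % e := step
      rwa [Nat.mod_eq_of_lt hm] at this
    have := key_modEq p f e l k hef hp2
    rw [h2] at this
    exact pow_mod_eq_of_modEq p g hp hg1 this
end

section
/- Let p be an odd prime, f even with f ∣ p−1, g a primitive root modulo p² with Fermat quotient q_p(g) = 1, and b any integer with 0 ≤ b < fp. Let v ∈ {1, 2, …, p−1} and V_v = {v, v+p, …, v+(p−1)p}. If v ∈ Q_b then |V_v ∩ C_0| = (p−1)/2 and |V_v ∩ C_1| = (p+1)/2; if v ∈ N_b then |V_v ∩ C_0| = (p+1)/2 and |V_v ∩ C_1| = (p−1)/2. -/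
/-!
Write `v ≡ g^m (mod p)` with `m < p - 1`; a primitive root modulo `p²` is also one modulo `p`,
because `(ℤ/p²)ˣ → (ℤ/p)ˣ` is surjective. By Fermat, `V_v` is the set of residues
`g^(m + j(p-1)) mod p²` with `0 ≤ j < p`, and since `g` has order `p(p-1)` modulo `p²`, such a
residue lies in `C_1` exactly when `(m + j(p-1) - b) mod pf < pf/2`, and in `C_0` otherwise.
Writing `p - 1 = ef` with `gcd(e, p) = 1`, these `p` residues modulo `pf` are the residues
congruent to `m - b` modulo `f`, each taken once. Of them, `(p-1)/2` lie below
`pf/2 = ((p-1)/2) f + f/2`, plus one more exactly when `(m - b) mod f < f/2`, which is the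
condition `v ∈ Q_b`.
-/

open Polynomial Finset

/-- `(n - b) mod M`, computed without truncated subtraction. -/
def subMod (M n b : ℕ) : ℕ := (n + (M - b % M)) % M

section SubMod

variable {M : ℕ}

lemma subMod_lt (hM : 0 < M) (n b : ℕ) : subMod M n b < M := Nat.mod_lt _ hM

lemma subMod_add_mod (hM : 0 < M) (n b : ℕ) : (subMod M n b + b) % M = n % M := by
  have hb : n + (M - b % M) + b = n + M * (b / M + 1) := by
    have := Nat.mod_add_div b M
    have := Nat.mod_lt b hM
    rw [mul_add_one]
    omega
  rw [subMod, Nat.mod_add_mod, hb, Nat.add_mul_mod_self_left]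

lemma eq_subMod_of_add_mod (hM : 0 < M) {n b r : ℕ} (hr : r < M) (h : (r + b) % M = n % M) :
    r = subMod M n b :=
  (Nat.ModEq.add_right_cancel' b (h.trans (subMod_add_mod hM n b).symm)).eq_of_lt_of_lt hr
    (subMod_lt hM n b)

lemma subMod_add (n k b : ℕ) : subMod M (n + k) b = (subMod M n b + k) % M := by
  rw [subMod, subMod, Nat.mod_add_mod, add_right_comm]

lemma subMod_mod_of_dvd (hM : 0 < M) {f : ℕ} (hf : 0 < f) (hfM : f ∣ M) (n b : ℕ) :
    subMod M n b % f = subMod f n b := by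
  refine eq_subMod_of_add_mod hf (Nat.mod_lt _ hf) ?_
  rw [Nat.mod_add_mod, ← Nat.mod_mod_of_dvd _ hfM, subMod_add_mod hM, Nat.mod_mod_of_dvd _ hfM]

lemma exists_mod_eq_add_mod_iff (hM : 0 < M) {s : Finset ℕ} (hs : ∀ i ∈ s, i < M) (n b : ℕ) :
    (∃ i ∈ s, n % M = (i + b) % M) ↔ subMod M n b ∈ s :=
  ⟨fun ⟨i, hi, h⟩ => eq_subMod_of_add_mod hM (hs i hi) h.symm ▸ hi,
    fun h => ⟨_, h, (subMod_add_mod hM n b).symm⟩⟩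

end SubMod

lemma card_filter_range_mod_eq {f a : ℕ} (N : ℕ) (ha : a < f) :
    #{r ∈ range N | r % f = a} = N / f + if a < N % f then 1 else 0 := by
  have := Nat.count_modEq_card (b := N) (by omega : 0 < f) a
  rw [Nat.count_eq_card_filter_range, Nat.mod_eq_of_lt ha] at this
  simpa only [Nat.ModEq, Nat.mod_eq_of_lt ha] using this

lemma injOn_range_add_mul_mod {p e f : ℕ} (hcop : e.Coprime p) (hf : 0 < f) (c : ℕ) :
    Set.InjOn (fun j => (c + j * (e * f)) % (p * f)) (range p) := by
  intro j hj j' hj' h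
  have h1 : j * e * f ≡ j' * e * f [MOD p * f] := by
    simpa only [mul_assoc] using Nat.ModEq.add_left_cancel' c h
  have h2 : j ≡ j' [MOD p] :=
    Nat.ModEq.cancel_right_of_coprime (Nat.coprime_comm.mp hcop)
      (Nat.ModEq.mul_right_cancel' hf.ne' h1)
  exact h2.eq_of_lt_of_lt (mem_range.mp hj) (mem_range.mp hj')

lemma image_range_add_mul_mod {p e f : ℕ} (hcop : e.Coprime p) (hf : 0 < f) (c : ℕ) :
    (range p).image (fun j => (c + j * (e * f)) % (p * f)) =
      {r ∈ range (p * f) | r % f = c % f} := by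
  refine eq_of_subset_of_card_le (fun r hr => ?_) ?_
  · obtain ⟨j, hj, rfl⟩ := mem_image.mp hr
    have hp : 0 < p := by have := mem_range.mp hj; omega
    rw [mem_filter, mem_range, Nat.mod_mod_of_dvd _ (dvd_mul_left f p), ← mul_assoc,
      Nat.add_mul_mod_self_right]
    exact ⟨Nat.mod_lt _ (Nat.mul_pos hp hf), rfl⟩
  · rw [card_image_of_injOn (injOn_range_add_mul_mod hcop hf c), card_range,
      card_filter_range_mod_eq _ (Nat.mod_lt c hf), Nat.mul_div_cancel _ hf, Nat.mul_mod_left]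
    simp

lemma card_filter_range_add_mul_mod_lt {p e f : ℕ} (hcop : e.Coprime p) (hf : 0 < f) (c : ℕ)
    {K : ℕ} (hK : K ≤ p * f) :
    #{j ∈ range p | (c + j * (e * f)) % (p * f) < K} = #{r ∈ range K | r % f = c % f} := by
  calc #{j ∈ range p | (c + j * (e * f)) % (p * f) < K}
      = #{r ∈ (range p).image (fun j => (c + j * (e * f)) % (p * f)) | r < K} := by
        rw [filter_image, card_image_of_injOn ((injOn_range_add_mul_mod hcop hf c).mono
          (coe_subset.mpr (filter_subset _ _)))]
    _ = #{r ∈ range K | r % f = c % f} := by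
        rw [image_range_add_mul_mod hcop hf c, filter_filter]
        congr 1
        ext r
        simp only [mem_filter, mem_range]
        omega

lemma card_filter_subMod_lt {p f : ℕ} (hodd : Odd p) (hf : Even f) (hfpos : 0 < f)
    (hfd : f ∣ p - 1) (m b : ℕ) :
    #{j ∈ range p | subMod (p * f) (m + j * (p - 1)) b < p * f / 2}
      = (p - 1) / 2 + if subMod f m b < f / 2 then 1 else 0 := by
  obtain ⟨e, he⟩ := hfd
  have hpf : 0 < p * f := Nat.mul_pos hodd.pos hfpos
  have hcop : e.Coprime p := Nat.Coprime.coprime_dvd_left (Dvd.intro_left f he.symm)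
    ((Nat.coprime_self_sub_left hodd.pos).mpr (Nat.coprime_one_left p))
  have hK : p * f / 2 = f * ((p - 1) / 2) + f / 2 := by
    obtain ⟨s, rfl⟩ := hodd
    obtain ⟨t, rfl⟩ := hf
    rw [show (2 * s + 1) * (t + t) = 2 * ((2 * s + 1) * t) by ring,
      Nat.mul_div_cancel_left _ two_pos, show (2 * s + 1 - 1) / 2 = s by omega,
      show (t + t) / 2 = t by omega]
    ring
  conv_lhs => simp only [subMod_add, he, mul_comm f e]
  rw [card_filter_range_add_mul_mod_lt hcop hfpos _ (Nat.div_le_self _ _),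
    subMod_mod_of_dvd hpf hfpos (dvd_mul_left f p), card_filter_range_mod_eq _
      (subMod_lt hfpos m b), hK, Nat.mul_add_div hfpos, Nat.mul_add_mod,
    Nat.div_eq_of_lt (Nat.div_lt_self hfpos one_lt_two), Nat.mod_eq_of_lt
      (Nat.div_lt_self hfpos one_lt_two), add_zero]

lemma orderOf_map_eq_card_of_surjective {G H : Type*} [Group G] [Group H] [Finite G]
    {φ : G →* H} (hφ : Function.Surjective φ) {x : G} (hx : orderOf x = Nat.card G) :
    orderOf (φ x) = Nat.card H := by
  have hx' : Subgroup.zpowers x = ⊤ :=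
    Subgroup.eq_top_of_card_eq _ (by rw [Nat.card_zpowers, hx])
  rw [← Nat.card_zpowers, ← MonoidHom.map_zpowers, hx', ← MonoidHom.range_eq_map,
    MonoidHom.range_eq_top.mpr hφ, Subgroup.card_top]

lemma totient_prime_sq {p : ℕ} (hp : p.Prime) : Nat.totient (p ^ 2) = p * (p - 1) := by
  simpa using Nat.totient_prime_pow_succ hp 1

lemma isPrimitiveRoot_of_isPrimRoot_sq {p g : ℕ} (hp : p.Prime) (hg : isPrimRoot g (p ^ 2)) :
    IsPrimitiveRoot (g : ZMod (p ^ 2)) (p * (p - 1)) := by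
  rw [isPrimRoot, totient_prime_sq hp] at hg
  exact hg ▸ IsPrimitiveRoot.orderOf _

lemma IsPrimitiveRoot.natCast_of_sq {p g : ℕ} (hp : p.Prime)
    (hg : IsPrimitiveRoot (g : ZMod (p ^ 2)) (p * (p - 1))) :
    IsPrimitiveRoot (g : ZMod p) (p - 1) := by
  have : Fact p.Prime := ⟨hp⟩
  have hu := hg.isUnit (Nat.mul_pos hp.pos (Nat.sub_pos_of_lt hp.one_lt)).ne'
  have hcard : orderOf hu.unit = Nat.card (ZMod (p ^ 2))ˣ := by
    rw [← orderOf_units, IsUnit.unit_spec, ← hg.eq_orderOf, Nat.card_eq_fintype_card,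
      ZMod.card_units_eq_totient, totient_prime_sq hp]
  have hdvd : p ∣ p ^ 2 := dvd_pow_self p two_ne_zero
  have := orderOf_map_eq_card_of_surjective (ZMod.unitsMap_surjective hdvd) hcard
  rw [← orderOf_units, ZMod.unitsMap_val, IsUnit.unit_spec, ZMod.cast_natCast hdvd,
    Nat.card_eq_fintype_card, ZMod.card_units] at this
  exact this ▸ IsPrimitiveRoot.orderOf _

lemma exists_pow_mod_eq_s16 {p g v : ℕ} (hp : p.Prime) (hg : IsPrimitiveRoot (g : ZMod p) (p - 1))
    (hv1 : 1 ≤ v) (hvp : v ≤ p - 1) : ∃ m < p - 1, g ^ m % p = v := by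
  have : Fact p.Prime := ⟨hp⟩
  have : NeZero (p - 1) := ⟨by have := hp.two_le; omega⟩
  have hv : (v : ZMod p) ≠ 0 := by
    rw [Ne, ZMod.natCast_eq_zero_iff]
    exact Nat.not_dvd_of_pos_of_lt hv1 (by omega)
  obtain ⟨m, hm, hgm⟩ := hg.eq_pow_of_pow_eq_one (ZMod.pow_card_sub_one_eq_one hv)
  refine ⟨m, hm, ?_⟩
  rw [← Nat.mod_eq_of_lt (show v < p by omega), ← ZMod.natCast_eq_natCast_iff']
  exact_mod_cast hgm

lemma pow_mod_inj {N g k a c : ℕ} (hg : IsPrimitiveRoot (g : ZMod N) k) (ha : a < k) (hc : c < k) :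
    g ^ a % N = g ^ c % N ↔ a = c := by
  refine ⟨fun h => hg.pow_inj ha hc ?_, fun h => h ▸ rfl⟩
  exact_mod_cast (ZMod.natCast_eq_natCast_iff' _ _ N).mpr h

lemma exists_add_mul_eq_iff {e F l n : ℕ} (hl : l < F) (hn : n < e * F) :
    (∃ k < e, l + k * F = n) ↔ n % F = l := by
  constructor
  · rintro ⟨k, -, rfl⟩
    rw [Nat.add_mul_mod_self_right, Nat.mod_eq_of_lt hl]
  · intro h
    exact ⟨n / F, Nat.div_lt_of_lt_mul (by rwa [mul_comm]), by rw [← h, Nat.mod_add_div']⟩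

lemma pow_mod_mem_Dcl_iff_s16 {p f g j l n M : ℕ} (hM : f * p ^ (j - 1) = M)
    (hg : IsPrimitiveRoot (g : ZMod (p ^ j)) ((p - 1) / f * M)) (hl : l < M)
    (hn : n < (p - 1) / f * M) :
    g ^ n % p ^ j ∈ Dcl p f g j l ↔ n % M = l := by
  rw [← exists_add_mul_eq_iff hl hn, Dcl]
  simp only [mem_image, mem_range, mul_assoc, hM]
  refine exists_congr fun k => and_congr_right fun hk => pow_mod_inj hg ?_ hn
  nlinarith

lemma pow_mod_mem_biUnion_Dcl_iff {p f g j n M : ℕ} (hM : f * p ^ (j - 1) = M)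
    (hg : IsPrimitiveRoot (g : ZMod (p ^ j)) ((p - 1) / f * M)) (hn : n < (p - 1) / f * M)
    {s : Finset ℕ} (hs : ∀ i ∈ s, i < M) (b : ℕ) :
    g ^ n % p ^ j ∈ s.biUnion (fun i => Dcl p f g j ((i + b) % M)) ↔ subMod M n b ∈ s := by
  have hM0 : 0 < M := Nat.pos_of_ne_zero fun h => by simp [h] at hn
  rw [mem_biUnion, ← exists_mod_eq_add_mod_iff hM0 hs]
  exact exists_congr fun i => and_congr_right fun _ =>
    pow_mod_mem_Dcl_iff_s16 hM hg (Nat.mod_lt _ hM0) hn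

lemma pow_mod_mem_Qb_iff {p f g m : ℕ} (hfd : f ∣ p - 1)
    (hg : IsPrimitiveRoot (g : ZMod p) (p - 1)) (hm : m < p - 1) (b : ℕ) :
    g ^ m % p ∈ Qb p f g b ↔ subMod f m b < f / 2 := by
  have hg' : IsPrimitiveRoot (g : ZMod (p ^ 1)) ((p - 1) / f * f) := by
    rwa [pow_one, Nat.div_mul_cancel hfd]
  have := pow_mod_mem_biUnion_Dcl_iff (by simp) hg' (by rwa [Nat.div_mul_cancel hfd])
    (s := range (f / 2)) (fun i hi => by rw [mem_range] at hi; omega) b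
  rwa [pow_one, mem_range] at this

lemma mem_Vset_iff {p v x : ℕ} (hv : v < p) : x ∈ Vset p v ↔ x < p ^ 2 ∧ x % p = v := by
  simp only [Vset, mem_image, mem_range]
  constructor
  · rintro ⟨i, hi, rfl⟩
    refine ⟨by nlinarith, ?_⟩
    rw [Nat.add_mul_mod_self_right, Nat.mod_eq_of_lt hv]
  · rintro ⟨hx, rfl⟩
    exact ⟨x / p, Nat.div_lt_of_lt_mul (by rwa [← sq]), Nat.mod_add_div' x p⟩

lemma add_mul_sub_one_lt {p m j : ℕ} (hm : m < p - 1) (hj : j < p) :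
    m + j * (p - 1) < p * (p - 1) := by
  nlinarith

lemma sub_one_div_mul_mul {p f : ℕ} (hfd : f ∣ p - 1) : (p - 1) / f * (p * f) = p * (p - 1) := by
  rw [mul_left_comm, Nat.div_mul_cancel hfd]

lemma notMem_biUnion_image_mul {p x : ℕ} (hx : ¬ p ∣ x) (s : Finset ℕ) (t : ℕ → Finset ℕ) :
    x ∉ s.biUnion (fun i => (t i).image (p * ·)) := by
  simp only [mem_biUnion, mem_image]
  rintro ⟨-, -, w, -, rfl⟩
  exact hx (dvd_mul_right p w)

section PrimitiveRootSq

variable {p f g : ℕ} (hp : p.Prime) (hg : IsPrimitiveRoot (g : ZMod (p ^ 2)) (p * (p - 1)))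
include hp hg

lemma coprime_of_isPrimitiveRoot_sq : g.Coprime p :=
  Nat.Coprime.coprime_dvd_right (dvd_pow_self p two_ne_zero) <| (ZMod.isUnit_iff_coprime g _).mp <|
    hg.isUnit (Nat.mul_pos hp.pos (Nat.sub_pos_of_lt hp.one_lt)).ne'

lemma not_dvd_pow_mod_sq (n : ℕ) : ¬ p ∣ g ^ n % p ^ 2 := by
  rw [Nat.dvd_mod_iff (dvd_pow_self p two_ne_zero)]
  exact fun h => hp.coprime_iff_not_dvd.mp (coprime_of_isPrimitiveRoot_sq hp hg).symm
    (hp.dvd_of_dvd_pow h)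

lemma pow_add_mul_sub_one_mod (m j : ℕ) : g ^ (m + j * (p - 1)) % p = g ^ m % p := by
  have h := (Nat.ModEq.pow_totient (coprime_of_isPrimitiveRoot_sq hp hg)).pow j
  rw [Nat.totient_prime hp, one_pow, ← pow_mul, mul_comm] at h
  have := h.mul_left (g ^ m)
  rwa [mul_one, ← pow_add] at this

lemma pow_mod_sq_mem_C1_iff (hfd : f ∣ p - 1) {n : ℕ} (hn : n < p * (p - 1)) (b : ℕ) :
    g ^ n % p ^ 2 ∈ C1 p f g b ↔ subMod (p * f) n b < p * f / 2 := by
  have hT := sub_one_div_mul_mul hfd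
  have hx := not_dvd_pow_mod_sq hp hg n
  have h0 : g ^ n % p ^ 2 ≠ 0 := fun h => hx (h ▸ dvd_zero p)
  simp only [C1, mem_union, mem_singleton, h0, notMem_biUnion_image_mul hx, false_or, or_false]
  rw [pow_mod_mem_biUnion_Dcl_iff (by simp [mul_comm]) (hT ▸ hg) (hT ▸ hn)
    (fun i hi => by rw [mem_range] at hi; omega), mem_range]

lemma pow_mod_sq_mem_C0_iff (hfd : f ∣ p - 1) {n : ℕ} (hn : n < p * (p - 1)) (b : ℕ) :
    g ^ n % p ^ 2 ∈ C0 p f g b ↔ g ^ n % p ^ 2 ∉ C1 p f g b := by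
  have hT := sub_one_div_mul_mul hfd
  have hx := not_dvd_pow_mod_sq hp hg n
  simp only [C0, mem_union, notMem_biUnion_image_mul hx, false_or]
  rw [pow_mod_mem_biUnion_Dcl_iff (by simp [mul_comm]) (hT ▸ hg) (hT ▸ hn)
    (fun i hi => (mem_Ico.mp hi).2), mem_Ico, pow_mod_sq_mem_C1_iff hp hg hfd hn]
  have := subMod_lt (Nat.mul_pos hp.pos (Nat.pos_of_dvd_of_pos hfd (Nat.sub_pos_of_lt hp.one_lt)))
    n b
  omega

section Vset

variable {m : ℕ} (hm : m < p - 1)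
include hm

omit hp in
lemma injOn_pow_add_mul_mod_sq : Set.InjOn (fun j => g ^ (m + j * (p - 1)) % p ^ 2) (range p) := by
  intro j hj j' hj' h
  have := (pow_mod_inj hg (add_mul_sub_one_lt hm (mem_range.mp hj))
    (add_mul_sub_one_lt hm (mem_range.mp hj'))).mp h
  exact Nat.eq_of_mul_eq_mul_right (by omega) (by omega : j * (p - 1) = j' * (p - 1))

lemma Vset_pow_mod_eq_image :
    Vset p (g ^ m % p) = (range p).image (fun j => g ^ (m + j * (p - 1)) % p ^ 2) := by
  refine (eq_of_subset_of_card_le (fun x hx => ?_) ?_).symm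
  · obtain ⟨j, -, rfl⟩ := mem_image.mp hx
    rw [mem_Vset_iff (Nat.mod_lt _ hp.pos), Nat.mod_mod_of_dvd _ (dvd_pow_self p two_ne_zero),
      pow_add_mul_sub_one_mod hp hg]
    exact ⟨Nat.mod_lt _ (pow_pos hp.pos 2), rfl⟩
  · rw [card_image_of_injOn (injOn_pow_add_mul_mod_sq hg hm), card_range, Vset]
    exact card_image_le.trans (card_range p).le

lemma card_Vset_inter (C : Finset ℕ) :
    #(Vset p (g ^ m % p) ∩ C) = #{j ∈ range p | g ^ (m + j * (p - 1)) % p ^ 2 ∈ C} := by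
  rw [Vset_pow_mod_eq_image hp hg hm, ← filter_mem_eq_inter, filter_image,
    card_image_of_injOn ((injOn_pow_add_mul_mod_sq hg hm).mono
      (coe_subset.mpr (filter_subset _ _)))]

lemma card_Vset_inter_C1 (hfd : f ∣ p - 1) (b : ℕ) :
    #(Vset p (g ^ m % p) ∩ C1 p f g b)
      = #{j ∈ range p | subMod (p * f) (m + j * (p - 1)) b < p * f / 2} := by
  rw [card_Vset_inter hp hg hm]
  exact congrArg card (filter_congr fun j hj =>
    pow_mod_sq_mem_C1_iff hp hg hfd (add_mul_sub_one_lt hm (mem_range.mp hj)) b)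

lemma card_Vset_inter_C0_add_C1 (hfd : f ∣ p - 1) (b : ℕ) :
    #(Vset p (g ^ m % p) ∩ C0 p f g b) + #(Vset p (g ^ m % p) ∩ C1 p f g b) = p := by
  rw [card_Vset_inter hp hg hm, card_Vset_inter hp hg hm, add_comm,
    filter_congr fun j hj =>
      pow_mod_sq_mem_C0_iff hp hg hfd (add_mul_sub_one_lt hm (mem_range.mp hj)) b,
    card_filter_add_card_filter_not, card_range]

end Vset

end PrimitiveRootSq

theorem stmt16_general (p f g b v : ℕ) (hp : p.Prime) (hodd : Odd p)
    (hf : Even f) (hfpos : 0 < f) (hfd : f ∣ p - 1)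
    (hg : isPrimRoot g (p ^ 2))
    (hv1 : 1 ≤ v) (hvp : v ≤ p - 1) :
    (v ∈ Qb p f g b →
      (Vset p v ∩ C0 p f g b).card = (p - 1) / 2 ∧
      (Vset p v ∩ C1 p f g b).card = (p + 1) / 2) ∧
    (v ∈ Nb p f g b →
      (Vset p v ∩ C0 p f g b).card = (p + 1) / 2 ∧
      (Vset p v ∩ C1 p f g b).card = (p - 1) / 2) := by
  have hg2 := isPrimitiveRoot_of_isPrimRoot_sq hp hg
  have hg1 := hg2.natCast_of_sq hp
  obtain ⟨m, hm, rfl⟩ := exists_pow_mod_eq_s16 hp hg1 hv1 hvp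
  have hQ := pow_mod_mem_Qb_iff hfd hg1 hm b
  have hN : g ^ m % p ∈ Nb p f g b ↔ ¬ subMod f m b < f / 2 := by
    rw [Nb, mem_sdiff, mem_Ico, hQ]
    omega
  have hC1 := (card_Vset_inter_C1 hp hg2 hm hfd b).trans
    (card_filter_subMod_lt hodd hf hfpos hfd m b)
  have hC01 := card_Vset_inter_C0_add_C1 hp hg2 hm hfd b
  rw [hN, hQ]
  obtain ⟨s, rfl⟩ := hodd
  split_ifs at hC1 <;> omega

/-- for `v ∈ {1,…,p-1}`: if `v ∈ Q_b` then `|V_v ∩ C_0| = (p-1)/2` and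
`|V_v ∩ C_1| = (p+1)/2`; if `v ∈ N_b` then `|V_v ∩ C_0| = (p+1)/2` and
`|V_v ∩ C_1| = (p-1)/2`. -/
theorem stmt16 (p f g b v : ℕ) (hp : p.Prime) (hodd : Odd p)
    (hf : Even f) (hfpos : 0 < f) (hfd : f ∣ p - 1)
    (hg : isPrimRoot g (p ^ 2)) (hqg : qp p g = 1)
    (hb : b < f * p) (hv1 : 1 ≤ v) (hvp : v ≤ p - 1) :
    (v ∈ Qb p f g b →
      (Vset p v ∩ C0 p f g b).card = (p - 1) / 2 ∧
      (Vset p v ∩ C1 p f g b).card = (p + 1) / 2) ∧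
    (v ∈ Nb p f g b →
      (Vset p v ∩ C0 p f g b).card = (p + 1) / 2 ∧
      (Vset p v ∩ C1 p f g b).card = (p - 1) / 2) :=
  stmt16_general p f g b v hp hodd hf hfpos hfd hg hv1 hvp
end

section
/- Let p be an odd prime, f even with f ∣ p−1, and g a primitive root modulo p² with Fermat quotient q_p(g) = 1. Suppose 2 is a primitive root modulo p. Let θ be a primitive p-th root of unity in the algebraic closure of F₂ and ω_b = Σ_{n∈Q_b} θ^n. Then for every integer b, ω_b ∉ F₂, i.e., ω_b ≠ 0 and ω_b ≠ 1. -/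
open Polynomial Finset

section Aux
open IntermediateField

/-- If `2` has order `p-1` mod `p`, the minimal polynomial of a primitive `p`-th root of
unity `θ` over `F₂` is `1 + X + ⋯ + X^(p-1)`. -/
lemma aux_minpoly (p : ℕ) (hp : p.Prime)
    (h2 : orderOf (2 : ZMod p) = p - 1)
    (θ : AlgebraicClosure (ZMod 2)) (hθ : IsPrimitiveRoot θ p) :
    minpoly (ZMod 2) θ = ∑ i ∈ Finset.range p, Polynomial.X ^ i := by
  haveI : Fact p.Prime := ⟨hp⟩
  have hp1 : 1 < p := hp.one_lt
  have hint : IsIntegral (ZMod 2) θ := Algebra.IsIntegral.isIntegral θ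
  set Φ : Polynomial (ZMod 2) := ∑ i ∈ Finset.range p, Polynomial.X ^ i with hΦdef
  have hΦc : Φ = Polynomial.cyclotomic p (ZMod 2) := (Polynomial.cyclotomic_prime _ p).symm
  have hΦm : Φ.Monic := by rw [hΦc]; exact Polynomial.cyclotomic.monic p (ZMod 2)
  have hΦdeg : Φ.natDegree = p - 1 := by
    rw [hΦc, Polynomial.natDegree_cyclotomic, Nat.totient_prime hp]
  have hroot : Polynomial.aeval θ Φ = 0 := by
    have h1 : (Polynomial.aeval θ Φ) * (θ - 1) = θ ^ p - 1 := by
      rw [hΦdef]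
      simp only [map_sum, map_pow, Polynomial.aeval_X]
      exact geom_sum_mul θ p
    rw [hθ.pow_eq_one, sub_self] at h1
    have h3 : θ - 1 ≠ 0 := sub_ne_zero.mpr (hθ.ne_one hp1)
    exact (mul_eq_zero.mp h1).resolve_right h3
  have hdvd : minpoly (ZMod 2) θ ∣ Φ := minpoly.dvd _ _ hroot
  have hΦ0 : Φ ≠ 0 := hΦm.ne_zero
  set d := (minpoly (ZMod 2) θ).natDegree with hd
  have hdle : d ≤ p - 1 := hΦdeg ▸ Polynomial.natDegree_le_of_dvd hdvd hΦ0
  -- lower bound via the finite field F₂(θ)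
  have hcard : (2 : ZMod p) ^ d = 1 := by
    haveI := IntermediateField.adjoin.finiteDimensional hint
    haveI : Finite ((ZMod 2)⟮θ⟯) := Module.finite_of_finite (ZMod 2)
    haveI : Fintype ((ZMod 2)⟮θ⟯) := Fintype.ofFinite _
    have hcardL : Fintype.card ((ZMod 2)⟮θ⟯) = 2 ^ d := by
      rw [Module.card_eq_pow_finrank (K := ZMod 2), ZMod.card,
        IntermediateField.adjoin.finrank hint]
    set θ' : (ZMod 2)⟮θ⟯ := IntermediateField.AdjoinSimple.gen (ZMod 2) θ with hθ'
    have hmapgen : algebraMap ((ZMod 2)⟮θ⟯) (AlgebraicClosure (ZMod 2)) θ' = θ :=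
      IntermediateField.AdjoinSimple.algebraMap_gen _ _
    have hord : orderOf θ' = p := by
      have hinj : Function.Injective
          (algebraMap ((ZMod 2)⟮θ⟯) (AlgebraicClosure (ZMod 2))) :=
        (algebraMap ((ZMod 2)⟮θ⟯) (AlgebraicClosure (ZMod 2))).injective
      have := orderOf_injective
        (algebraMap ((ZMod 2)⟮θ⟯) (AlgebraicClosure (ZMod 2))).toMonoidHom hinj θ'
      simp only [RingHom.toMonoidHom_eq_coe, MonoidHom.coe_coe, hmapgen] at this
      rw [← this]
      exact hθ.eq_orderOf.symm
    have hθ'0 : θ' ≠ 0 := by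
      intro h0
      have : θ = 0 := by rw [← hmapgen, h0, map_zero]
      exact hθ.ne_zero hp.ne_zero this
    have hpow := FiniteField.pow_card_sub_one_eq_one θ' hθ'0
    rw [hcardL] at hpow
    have hpdvd : p ∣ 2 ^ d - 1 := by
      rw [← hord]; exact orderOf_dvd_of_pow_eq_one hpow
    have h1le : 1 ≤ 2 ^ d := Nat.one_le_two_pow
    have hz : ((2 ^ d - 1 : ℕ) : ZMod p) = 0 :=
      (ZMod.natCast_eq_zero_iff _ _).mpr hpdvd
    have : ((2 ^ d : ℕ) : ZMod p) = 1 := by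
      rw [Nat.cast_sub h1le] at hz
      push_cast at hz ⊢
      linear_combination hz
    push_cast at this
    exact this
  have hdvd3 : p - 1 ∣ d := by rw [← h2]; exact orderOf_dvd_of_pow_eq_one hcard
  have hdpos : 0 < d := minpoly.natDegree_pos hint
  have hdeq : d = p - 1 := Nat.le_antisymm hdle (Nat.le_of_dvd hdpos hdvd3)
  exact Polynomial.eq_of_monic_of_associated (minpoly.monic hint) hΦm
    (Polynomial.associated_of_dvd_of_natDegree_le hdvd hΦ0 (by rw [hΦdeg]; exact le_of_eq hdeq.symm))

/-- Key independence lemma: any subset of `{0,…,p-1}` whose `θ`-power sum vanishes is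
empty or everything. -/
lemma aux_key (p : ℕ) (hp : p.Prime)
    (h2 : orderOf (2 : ZMod p) = p - 1)
    (θ : AlgebraicClosure (ZMod 2)) (hθ : IsPrimitiveRoot θ p)
    (S : Finset ℕ) (hS : S ⊆ Finset.range p) (hs : ∑ n ∈ S, θ ^ n = 0) :
    S = ∅ ∨ S = Finset.range p := by
  have hp1 : 1 < p := hp.one_lt
  set P : Polynomial (ZMod 2) := ∑ n ∈ S, Polynomial.X ^ n with hPdef
  have hPc : ∀ m, P.coeff m = if m ∈ S then 1 else 0 := by
    intro m
    rw [hPdef, Polynomial.finset_sum_coeff]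
    simp only [Polynomial.coeff_X_pow]
    exact Finset.sum_ite_eq S m (fun _ => (1 : ZMod 2))
  by_cases hP : P = 0
  · left
    ext n
    simp only [Finset.notMem_empty, iff_false]
    intro hn
    have := hPc n
    rw [hP] at this
    simp only [Polynomial.coeff_zero, hn, if_true] at this
    exact absurd this (by decide)
  · right
    have haev : Polynomial.aeval θ P = 0 := by
      rw [hPdef]
      simpa only [map_sum, map_pow, Polynomial.aeval_X] using hs
    have hdvd := minpoly.dvd (ZMod 2) θ haev
    rw [aux_minpoly p hp h2 θ hθ] at hdvd
    set Φ : Polynomial (ZMod 2) := ∑ i ∈ Finset.range p, Polynomial.X ^ i with hΦdef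
    have hΦc : ∀ m, Φ.coeff m = if m < p then 1 else 0 := by
      intro m
      rw [hΦdef, Polynomial.finset_sum_coeff]
      simp only [Polynomial.coeff_X_pow]
      rw [Finset.sum_ite_eq (Finset.range p) m (fun _ => (1 : ZMod 2))]
      simp [Finset.mem_range]
    have hΦ0 : Φ ≠ 0 := fun h => by
      have := hΦc 0
      rw [h] at this
      simp [hp.pos] at this
    have hPdeg : P.natDegree ≤ p - 1 := by
      rw [Polynomial.natDegree_le_iff_coeff_eq_zero]
      intro m hm
      rw [hPc m, if_neg]
      intro hmem
      exact absurd (Finset.mem_range.mp (hS hmem)) (by omega)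
    have hΦdeg : Φ.natDegree = p - 1 := by
      haveI : Fact p.Prime := ⟨hp⟩
      rw [hΦdef, ← Polynomial.cyclotomic_prime (ZMod 2) p,
        Polynomial.natDegree_cyclotomic, Nat.totient_prime hp]
    -- P = Φ
    obtain ⟨c, hc⟩ := hdvd
    have hc0 : c ≠ 0 := fun h => hP (by rw [hc, h, mul_zero])
    have hcdeg : c.natDegree = 0 := by
      have := Polynomial.natDegree_mul hΦ0 hc0
      rw [← hc] at this
      omega
    have hcC : c = Polynomial.C (c.coeff 0) := Polynomial.eq_C_of_natDegree_eq_zero hcdeg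
    have hcoef0 : c.coeff 0 ≠ 0 := fun h => hc0 (by rw [hcC, h, map_zero])
    have hcoef1 : c.coeff 0 = 1 := by
      generalize c.coeff 0 = x at hcoef0 ⊢
      revert hcoef0; revert x; decide
    have hPΦ : P = Φ := by rw [hc, hcC, hcoef1, map_one, mul_one]
    ext n
    rw [Finset.mem_range]
    have h1 := hPc n
    rw [hPΦ, hΦc n] at h1
    constructor
    · intro hn
      by_contra hlt
      rw [if_neg hlt, if_pos hn] at h1
      exact absurd h1 (by decide)
    · intro hn
      by_contra hmem
      rw [if_pos hn, if_neg hmem] at h1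
      exact absurd h1 (by decide)

end Aux

/-- if `2` is a primitive root modulo `p`, then `ω_b ∉ F₂` for any `b`,
i.e. `ω_b ≠ 0` and `ω_b ≠ 1`. -/
theorem stmt18 (p f g : ℕ) (hp : p.Prime) (hodd : Odd p)
    (hf : Even f) (hfpos : 0 < f) (hfd : f ∣ p - 1)
    (hg : isPrimRoot g (p ^ 2)) (hqg : qp p g = 1)
    (h2 : isPrimRoot 2 p)
    (θ : AlgebraicClosure (ZMod 2)) (hθ : IsPrimitiveRoot θ p) :
    ∀ b : ℕ,
      (∑ n ∈ Qb p f g b, θ ^ n) ≠ 0 ∧ (∑ n ∈ Qb p f g b, θ ^ n) ≠ 1 := by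
  intro b
  haveI : Fact p.Prime := ⟨hp⟩
  have hp1 : 1 < p := hp.one_lt
  have hp3 : 3 ≤ p := by
    rcases hodd with ⟨k, hk⟩; omega
  have h2' : orderOf (2 : ZMod p) = p - 1 := by
    have h := h2
    unfold isPrimRoot at h
    rwa [Nat.totient_prime hp, Nat.cast_ofNat] at h
  -- p does not divide g
  have hpg : ¬ p ∣ g := by
    intro hdvd
    haveI : Fact (1 < p ^ 2) := ⟨by nlinarith⟩
    have hg2 : ((g : ZMod (p ^ 2))) ^ 2 = 0 := by
      have hd2 : (p ^ 2 : ℕ) ∣ g ^ 2 := pow_dvd_pow_of_dvd hdvd 2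
      calc ((g : ℕ) : ZMod (p ^ 2)) ^ 2 = ((g ^ 2 : ℕ) : ZMod (p ^ 2)) := by push_cast; ring
        _ = 0 := (ZMod.natCast_eq_zero_iff _ _).mpr hd2
    have htot : 2 ≤ Nat.totient (p ^ 2) := by
      rw [Nat.totient_prime_pow hp (by norm_num)]
      have : p ^ (2 - 1) = p := by norm_num
      rw [this]
      have h6 : 2 * 1 ≤ p * (p - 1) := Nat.mul_le_mul (by omega) (by omega)
      omega
    have hone : ((g : ZMod (p ^ 2))) ^ (Nat.totient (p ^ 2)) = 1 := by
      rw [← hg]; exact pow_orderOf_eq_one _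
    obtain ⟨t, ht⟩ : ∃ t, Nat.totient (p ^ 2) = 2 + t := ⟨Nat.totient (p ^ 2) - 2, by omega⟩
    rw [ht, pow_add, hg2, zero_mul] at hone
    exact zero_ne_one hone
  -- Qb ⊆ Ico 1 p
  have hQsub : Qb p f g b ⊆ Finset.Ico 1 p := by
    intro x hx
    unfold Qb at hx
    rw [Finset.mem_biUnion] at hx
    obtain ⟨i, _, hx⟩ := hx
    unfold Dcl at hx
    rw [Finset.mem_image] at hx
    obtain ⟨k, _, rfl⟩ := hx
    rw [pow_one]
    refine Finset.mem_Ico.mpr ⟨?_, Nat.mod_lt _ hp.pos⟩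
    rw [Nat.one_le_iff_ne_zero]
    intro h0
    exact hpg (hp.dvd_of_dvd_pow (Nat.dvd_of_mod_eq_zero h0))
  have hsubr : Qb p f g b ⊆ Finset.range p := by
    intro x hx
    have := Finset.mem_Ico.mp (hQsub hx)
    exact Finset.mem_range.mpr this.2
  have h0nm : 0 ∉ Qb p f g b := by
    intro h
    have := Finset.mem_Ico.mp (hQsub h)
    omega
  -- Qb is nonempty
  have hf2 : 0 < f / 2 := by
    rcases hf with ⟨m, hm⟩; omega
  have he : 0 < (p - 1) / f := Nat.div_pos (Nat.le_of_dvd (by omega) hfd) hfpos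
  have hQne : (Qb p f g b).Nonempty := by
    refine ⟨g ^ ((0 + b) % f + 0 * f * p ^ 0) % p ^ 1, ?_⟩
    unfold Qb Dcl
    rw [Finset.mem_biUnion]
    exact ⟨0, Finset.mem_range.mpr hf2,
      Finset.mem_image.mpr ⟨0, Finset.mem_range.mpr he, rfl⟩⟩
  -- card bound
  have hcardQ : (Qb p f g b).card ≤ f / 2 * ((p - 1) / f) := by
    unfold Qb
    refine le_trans Finset.card_biUnion_le ?_
    calc ∑ i ∈ Finset.range (f / 2), (Dcl p f g 1 ((i + b) % f)).card
        ≤ ∑ _i ∈ Finset.range (f / 2), (p - 1) / f :=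
          Finset.sum_le_sum (fun i _ =>
            le_trans Finset.card_image_le (le_of_eq (Finset.card_range _)))
      _ = f / 2 * ((p - 1) / f) := by
          rw [Finset.sum_const, Finset.card_range, smul_eq_mul]
  have hhalf : f / 2 * ((p - 1) / f) = (p - 1) / 2 := by
    obtain ⟨m, hm⟩ := hf
    obtain ⟨e, he'⟩ := hfd
    have hm2 : f / 2 = m := by omega
    have hf' : (p - 1) / f = e := by rw [he']; exact Nat.mul_div_cancel_left e hfpos
    rw [hm2, hf', he', hm]
    have h1 : (m + m) * e = 2 * (m * e) := by ring
    rw [h1, Nat.mul_div_cancel_left _ (by norm_num)]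
  have hcardQ2 : (Qb p f g b).card ≤ (p - 1) / 2 := hhalf ▸ hcardQ
  constructor
  · intro hsum
    rcases aux_key p hp h2' θ hθ _ hsubr hsum with h | h
    · exact hQne.ne_empty h
    · exact h0nm (h ▸ Finset.mem_range.mpr hp.pos)
  · intro hsum
    haveI : CharP (AlgebraicClosure (ZMod 2)) 2 :=
      charP_of_injective_algebraMap
        (algebraMap (ZMod 2) (AlgebraicClosure (ZMod 2))).injective 2
    have hsum0 : ∑ n ∈ insert 0 (Qb p f g b), θ ^ n = 0 := by
      rw [Finset.sum_insert h0nm, hsum, pow_zero]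
      exact CharTwo.add_self_eq_zero 1
    have hsubr' : insert 0 (Qb p f g b) ⊆ Finset.range p := by
      intro x hx
      rcases Finset.mem_insert.mp hx with rfl | hx
      · exact Finset.mem_range.mpr hp.pos
      · exact hsubr hx
    rcases aux_key p hp h2' θ hθ _ hsubr' hsum0 with h | h
    · exact Finset.insert_ne_empty _ _ h
    · have hc := congrArg Finset.card h
      rw [Finset.card_insert_of_notMem h0nm, Finset.card_range] at hc
      omega
end
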